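/- arXiv:1911.08282 — 5 statements merged into one kernel-verified Lean document; each statement's English description precedes it below -/
import Mathlib

section
/- Let M be a left 𝕆-module and let m ∈ 𝒜(M) be an associative element. Then for all p, q, r ∈ 𝕆, the left associator satisfies [p,q,rm] = [p,q,r]m, where [p,q,r] is the octonion associator. -/
noncomputable section

open scoped Quaternion

/-- The octonions, realized as pairs of quaternions via the Cayley–Dickson construction. -/
def Octo : Type := ℍ[ℝ] × ℍ[ℝ]

namespace Octo

instance : AddCommGroup Octo := inferInstanceAs (AddCommGroup (ℍ[ℝ] × ℍ[ℝ]))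
instance : Module ℝ Octo := inferInstanceAs (Module ℝ (ℍ[ℝ] × ℍ[ℝ]))

/-- Build an octonion from a pair of quaternions. -/
def mk (a b : ℍ[ℝ]) : Octo := (a, b)

/-- First quaternion component. -/
def p1 (x : Octo) : ℍ[ℝ] := (show ℍ[ℝ] × ℍ[ℝ] from x).1

/-- Second quaternion component. -/
def p2 (x : Octo) : ℍ[ℝ] := (show ℍ[ℝ] × ℍ[ℝ] from x).2

/-- Cayley–Dickson multiplication: `(a,b)(c,d) = (ac − d̄b, da + bc̄)`. -/
instance : Mul Octo :=
  ⟨fun x y => mk (p1 x * p1 y - star (p2 y) * p2 x) (p2 y * p1 x + p2 x * star (p1 y))⟩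

instance : One Octo := ⟨mk 1 0⟩

/-- Octonion conjugation: for `x = (a,b)`, `x̄ = (ā, −b)`. -/
def conj (x : Octo) : Octo := mk (star (p1 x)) (-(p2 x))

/-- The octonion associator `[x,y,z] = (xy)z − x(yz)`. -/
def assoc (x y z : Octo) : Octo := x * y * z - x * (y * z)

/-- The octonion commutator `[x,y] = xy − yx`. -/
def comm (x y : Octo) : Octo := x * y - y * x

/-- The canonical embedding of the reals into the octonions. -/
def ofReal (r : ℝ) : Octo := r • (1 : Octo)

end Octo

section OMod

variable {M : Type*} [AddCommGroup M] [Module ℝ M]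
variable {N : Type*} [AddCommGroup N] [Module ℝ N]

/-- `IsOMod sm` says that the scalar multiplication `sm : 𝕆 × M → M` makes the real vector
space `M` a left 𝕆-module: `sm` is ℝ-bilinear, unital, and the left associator is
alternating in its two octonion arguments. -/
structure IsOMod (sm : Octo → M → M) : Prop where
  smul_add : ∀ (p : Octo) (m n : M), sm p (m + n) = sm p m + sm p n
  add_smul : ∀ (p q : Octo) (m : M), sm (p + q) m = sm p m + sm q m
  real_smul : ∀ (r : ℝ) (p : Octo) (m : M), sm (r • p) m = r • sm p m
  smul_real : ∀ (r : ℝ) (p : Octo) (m : M), sm p (r • m) = r • sm p m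
  one_smul : ∀ m : M, sm 1 m = m
  alt : ∀ (p q : Octo) (m : M),
    sm (p * q) m - sm p (sm q m) = -(sm (q * p) m - sm q (sm p m))

/-- The left associator `[p,q,m] = (pq)m − p(qm)`. -/
def oLassoc (sm : Octo → M → M) (p q : Octo) (m : M) : M :=
  sm (p * q) m - sm p (sm q m)

/-- The set `𝒜(M)` of associative elements: `[p,q,m] = 0` for all `p,q ∈ 𝕆`. -/
def assocSet (sm : Octo → M → M) : Set M :=
  {m | ∀ p q : Octo, oLassoc sm p q m = 0}

/-- The set `𝒜⁻(M)` of conjugate associative elements: `(pq)m = q(pm)` for all `p,q ∈ 𝕆`. -/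
def conjAssocSet (sm : Octo → M → M) : Set M :=
  {m | ∀ p q : Octo, sm (p * q) m = sm q (sm p m)}

/-- A homomorphism of left 𝕆-modules: an ℝ-linear map commuting with 𝕆-scalar
multiplication. -/
def IsOHom (sm : Octo → M → M) (sm' : Octo → N → N) (f : M → N) : Prop :=
  IsLinearMap ℝ f ∧ ∀ (p : Octo) (m : M), f (sm p m) = sm' p (f m)

/-- Two left 𝕆-modules are isomorphic if there is a bijective homomorphism between them. -/
def OIso (sm : Octo → M → M) (sm' : Octo → N → N) : Prop :=
  ∃ f : M → N, IsOHom sm sm' f ∧ Function.Bijective f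

/-- A submodule: a real subspace closed under 𝕆-scalar multiplication. -/
structure IsOSubmodule (sm : Octo → M → M) (S : Set M) : Prop where
  zero_mem : (0 : M) ∈ S
  add_mem : ∀ {x y : M}, x ∈ S → y ∈ S → x + y ∈ S
  smul_mem : ∀ (r : ℝ) {x : M}, x ∈ S → r • x ∈ S
  osmul_mem : ∀ (p : Octo) {x : M}, x ∈ S → sm p x ∈ S

/-- `⟨m⟩_𝕆`, the smallest submodule containing `m`, as a set. -/
def genSet (sm : Octo → M → M) (m : M) : Set M :=
  ⋂₀ {S : Set M | IsOSubmodule sm S ∧ m ∈ S}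

/-- An element `m` is cyclic if `⟨m⟩_𝕆 = 𝕆m`. -/
def IsOCyclic (sm : Octo → M → M) (m : M) : Prop :=
  genSet sm m = {x | ∃ p : Octo, x = sm p m}

/-- 𝕆-linear independence of a subset `S ⊆ M`: any finite 𝕆-linear combination of
distinct elements of `S` that vanishes has all coefficients zero. -/
def OLinIndep (sm : Octo → M → M) (S : Set M) : Prop :=
  ∀ (n : ℕ) (s : Fin n → M) (r : Fin n → Octo), Function.Injective s → (∀ i, s i ∈ S) →
    (∑ i, sm (r i) (s i)) = 0 → ∀ i, r i = 0

end OMod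

/-- The canonical left 𝕆-module structure on 𝕆 itself. -/
def oSmul : Octo → Octo → Octo := fun p x => p * x

/-- The left 𝕆-module structure `𝕆̄` on 𝕆: `p ·̂ x = p̄x`. -/
def oBarSmul : Octo → Octo → Octo := fun p x => Octo.conj p * x

theorem IsOMod.sub_smul {M : Type*} [AddCommGroup M] [Module ℝ M] {sm : Octo → M → M}
    (h : IsOMod sm) (p q : Octo) (m : M) : sm (p - q) m = sm p m - sm q m := by
  rw [eq_sub_iff_add_eq, ← h.add_smul, sub_add_cancel]

theorem mul_smul_of_mem_assocSet {M : Type*} [AddCommGroup M] [Module ℝ M] {sm : Octo → M → M}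
    {m : M} (hm : m ∈ assocSet sm) (p q : Octo) : sm (p * q) m = sm p (sm q m) :=
  sub_eq_zero.mp (hm p q)

/-- For an associative element `m`, `[p,q,rm] = [p,q,r]m` for all `p,q,r ∈ 𝕆`. -/
theorem stmt4 {M : Type*} [AddCommGroup M] [Module ℝ M]
    (sm : Octo → M → M) (h : IsOMod sm) (m : M) (hm : m ∈ assocSet sm) (p q r : Octo) :
    oLassoc sm p q (sm r m) = sm (Octo.assoc p q r) m := by
  calc oLassoc sm p q (sm r m)
      = sm (p * q * r) m - sm (p * (q * r)) m := by
        simp only [oLassoc, mul_smul_of_mem_assocSet hm]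
    _ = sm (Octo.assoc p q r) m := (h.sub_smul _ _ m).symm
end
end

section
/- For the left 𝕆-module 𝕆̄ (the octonions with scalar multiplication p ·̂ x := p̄x), the set of conjugate associative elements is exactly the real multiples of 1: 𝒜⁻(𝕆̄) = ℝ. -/
noncomputable section

open scoped Quaternion

/-!
Conjugation is an involutive anti-automorphism of `𝕆`, so the defining identity
`(pq)·̂m = q·̂(p·̂m)` of `𝒜⁻(𝕆̄)` reads `(q̄p̄)m = q̄(p̄m)`: the conjugate associative elements
of `𝕆̄` are exactly the elements of the nucleus `𝒜(𝕆)`. For `m = (a, b)` and quaternions `u, v`,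
the associator `[(u,0), (v,0), m]` is `(0, b(uv − vu))`, which forces `b = 0`, and the second
component of `[(u,0), (0,1), m]` is `uā − āu`, so `ā` is central in `ℍ`, hence real.
-/

namespace Quaternion

lemma eq_coe_re_of_forall_commute {q : ℍ[ℝ]} (h : ∀ u : ℍ[ℝ], u * q = q * u) : q = q.re := by
  -- An anonymous-constructor literal has type `ℍ[ℝ,-1,0,-1]`, which is not reducibly `ℍ[ℝ]`,
  -- so `re_mul` and friends only fire on named quaternions.
  obtain ⟨i, hi_def⟩ : ∃ i : ℍ[ℝ], i = ⟨0, 1, 0, 0⟩ := ⟨_, rfl⟩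
  obtain ⟨j, hj_def⟩ : ∃ j : ℍ[ℝ], j = ⟨0, 0, 1, 0⟩ := ⟨_, rfl⟩
  have hi := h i
  have hj := h j
  simp only [Quaternion.ext_iff, re_mul, imI_mul, imJ_mul, imK_mul] at hi hj
  subst hi_def hj_def
  ext <;> simp at * <;> linarith

lemma exists_mul_sub_mul_ne_zero : ∃ u v : ℍ[ℝ], u * v - v * u ≠ 0 := by
  by_contra! h
  have h_central := eq_coe_re_of_forall_commute (q := ⟨0, 1, 0, 0⟩) fun u => sub_eq_zero.mp (h u _)
  simpa using congrArg QuaternionAlgebra.imI h_central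

end Quaternion

namespace Octo

@[simp] lemma p2_mk (a b : ℍ[ℝ]) : p2 (mk a b) = b := rfl

lemma mk_p1_p2 (x : Octo) : mk (p1 x) (p2 x) = x := rfl

lemma mk_mul_mk (a b c d : ℍ[ℝ]) :
    mk a b * mk c d = mk (a * c - star d * b) (d * a + b * star c) := rfl

lemma conj_mk (a b : ℍ[ℝ]) : conj (mk a b) = mk (star a) (-b) := rfl

lemma mk_sub_mk (a b c d : ℍ[ℝ]) : mk a b - mk c d = mk (a - c) (b - d) := rfl

lemma mk_eq_zero {a b : ℍ[ℝ]} : mk a b = 0 ↔ a = 0 ∧ b = 0 := Prod.mk_eq_zero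

lemma one_eq_mk : (1 : Octo) = mk 1 0 := rfl

lemma smul_mk (r : ℝ) (a b : ℍ[ℝ]) : r • mk a b = mk (r • a) (r • b) := rfl

lemma ofReal_eq_mk (r : ℝ) : ofReal r = mk r 0 := by
  rw [ofReal, one_eq_mk, smul_mk, smul_zero, ← Algebra.algebraMap_eq_smul_one]
  rfl

lemma conj_conj (x : Octo) : conj (conj x) = x := by
  rw [← mk_p1_p2 x, conj_mk, conj_mk, star_star, neg_neg]

lemma conj_mul (x y : Octo) : conj (x * y) = conj y * conj x := by
  rw [← mk_p1_p2 x, ← mk_p1_p2 y]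
  simp only [mk_mul_mk, conj_mk, star_sub, star_mul, star_star, star_neg]
  congr 1 <;> noncomm_ring

protected lemma mul_one (x : Octo) : x * 1 = x := by
  rw [← mk_p1_p2 x, one_eq_mk, mk_mul_mk]
  simp

protected lemma mul_smul_comm (r : ℝ) (x y : Octo) : x * (r • y) = r • (x * y) := by
  rw [← mk_p1_p2 x, ← mk_p1_p2 y, smul_mk, mk_mul_mk, mk_mul_mk, smul_mk]
  simp [smul_sub, smul_add]

lemma assoc_mk_zero_mk_zero (u v : ℍ[ℝ]) (x : Octo) :
    assoc (mk u 0) (mk v 0) x = mk 0 (p2 x * (u * v - v * u)) := by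
  rw [assoc, ← mk_p1_p2 x]
  simp only [mk_mul_mk, mk_sub_mk, p2_mk, star_zero]
  congr 1 <;> noncomm_ring

lemma assoc_mk_zero_mk_zero_one (u : ℍ[ℝ]) (x : Octo) :
    assoc (mk u 0) (mk 0 1) x =
      mk (u * star (p2 x) - star (p2 x) * u) (u * star (p1 x) - star (p1 x) * u) := by
  rw [assoc, ← mk_p1_p2 x]
  simp only [mk_mul_mk, mk_sub_mk, p2_mk, star_zero]
  congr 1 <;> noncomm_ring

lemma eq_ofReal_of_forall_assoc_eq_zero {x : Octo} (h : ∀ p q, assoc p q x = 0) :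
    x = ofReal (p1 x).re := by
  have hb : p2 x = 0 := by
    obtain ⟨u, v, huv⟩ := Quaternion.exists_mul_sub_mul_ne_zero
    have := h (mk u 0) (mk v 0)
    rw [assoc_mk_zero_mk_zero, mk_eq_zero] at this
    exact (mul_eq_zero.mp this.2).resolve_right huv
  have hstar : star (p1 x) = (star (p1 x)).re := by
    refine Quaternion.eq_coe_re_of_forall_commute fun u => ?_
    have := h (mk u 0) (mk 0 1)
    rw [assoc_mk_zero_mk_zero_one, mk_eq_zero, sub_eq_zero, sub_eq_zero] at this
    exact this.2
  have ha : p1 x = (p1 x).re := by simpa using congrArg star hstar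
  rw [ofReal_eq_mk, ← ha, ← hb, mk_p1_p2]

lemma assoc_ofReal (p q : Octo) (r : ℝ) : assoc p q (ofReal r) = 0 := by
  simp only [assoc, ofReal, Octo.mul_smul_comm, Octo.mul_one, sub_self]

end Octo

theorem assocSet_oSmul : assocSet oSmul = Set.range Octo.ofReal := by
  ext x
  refine ⟨fun h => ⟨_, (Octo.eq_ofReal_of_forall_assoc_eq_zero h).symm⟩, ?_⟩
  rintro ⟨r, rfl⟩ p q
  exact Octo.assoc_ofReal p q r

theorem conjAssocSet_oBarSmul : conjAssocSet oBarSmul = assocSet oSmul := by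
  ext x
  simp only [conjAssocSet, assocSet, oLassoc, oBarSmul, oSmul, Octo.conj_mul,
    sub_eq_zero]
  refine ⟨fun h p q => ?_, fun h p q => h _ _⟩
  simpa only [Octo.conj_conj] using h (Octo.conj q) (Octo.conj p)

/-- `𝒜⁻(𝕆̄) = ℝ`, the real multiples of `1`. -/
theorem stmt7 : conjAssocSet oBarSmul = Set.range Octo.ofReal :=
  conjAssocSet_oBarSmul.trans assocSet_oSmul
end
end

section
/- For any left 𝕆-module M, the set of associative elements and the set of conjugate associative elements intersect trivially: 𝒜(M) ∩ 𝒜⁻(M) = {0}. -/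
/-
If `m` is both associative and conjugate associative, then `(pq)m = p(qm)` and `(qp)m = p(qm)`,
so every commutator `[p,q] = pq − qp` annihilates `m`. Since the quaternion subalgebra of `𝕆` is
already noncommutative, some commutator is invertible, say `r[p,q] = 1`, and then
`m = (r[p,q])m = r([p,q]m) = 0`.
-/

noncomputable section

open scoped Quaternion

lemma Quaternion.exists_mul_commutator_eq_one : ∃ a b r : ℍ[ℝ], r * (a * b - b * a) = 1 := by
  have h : (⟨0, 0, 0, -(1 / 2)⟩ : ℍ[ℝ]) *
      (⟨0, 1, 0, 0⟩ * ⟨0, 0, 1, 0⟩ - ⟨0, 0, 1, 0⟩ * ⟨0, 1, 0, 0⟩) = 1 := by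
    ext <;> norm_num
  exact ⟨_, _, _, h⟩

namespace Octo

lemma mk_zero_mul_mk_zero (a c : ℍ[ℝ]) : mk a 0 * mk c 0 = mk (a * c) 0 := by
  simp only [mk_mul_mk, star_zero, mul_zero, zero_mul, sub_zero, add_zero]

lemma comm_mk_zero (a c : ℍ[ℝ]) : comm (mk a 0) (mk c 0) = mk (a * c - c * a) 0 := by
  simp only [comm, mk_zero_mul_mk_zero]
  exact congrArg (Prod.mk _) (sub_zero 0)

lemma exists_mul_comm_eq_one : ∃ p q r : Octo, r * comm p q = 1 := by
  obtain ⟨a, b, r, h⟩ := Quaternion.exists_mul_commutator_eq_one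
  refine ⟨mk a 0, mk b 0, mk r 0, ?_⟩
  rw [comm_mk_zero, mk_zero_mul_mk_zero, h]
  rfl

end Octo

lemma mem_assocSet_iff {M : Type*} [AddCommGroup M] {sm : Octo → M → M} {m : M} :
    m ∈ assocSet sm ↔ ∀ p q : Octo, sm (p * q) m = sm p (sm q m) := by
  simp only [assocSet, oLassoc, Set.mem_ofPred_eq, sub_eq_zero]

namespace IsOMod

variable {M : Type*} [AddCommGroup M] [Module ℝ M] {sm : Octo → M → M}

lemma smul_zero (h : IsOMod sm) (p : Octo) : sm p 0 = 0 := by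
  simpa using h.smul_add p 0 0

lemma sub_smul_s8 (h : IsOMod sm) (p q : Octo) (m : M) : sm (p - q) m = sm p m - sm q m := by
  rw [eq_sub_iff_add_eq, ← h.add_smul, sub_add_cancel]

lemma zero_mem_assocSet (h : IsOMod sm) : (0 : M) ∈ assocSet sm :=
  mem_assocSet_iff.2 fun p q => by rw [h.smul_zero, h.smul_zero, h.smul_zero]

lemma zero_mem_conjAssocSet (h : IsOMod sm) : (0 : M) ∈ conjAssocSet sm :=
  fun p q => by rw [h.smul_zero, h.smul_zero, h.smul_zero]

lemma comm_smul_eq_zero_of_mem_inter (h : IsOMod sm) {m : M}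
    (hm : m ∈ assocSet sm ∩ conjAssocSet sm) (p q : Octo) : sm (Octo.comm p q) m = 0 := by
  rw [Octo.comm, h.sub_smul_s8, hm.2, mem_assocSet_iff.1 hm.1, sub_self]

lemma eq_zero_of_mem_inter (h : IsOMod sm) {m : M}
    (hm : m ∈ assocSet sm ∩ conjAssocSet sm) : m = 0 := by
  obtain ⟨p, q, r, hr⟩ := Octo.exists_mul_comm_eq_one
  calc m = sm (r * Octo.comm p q) m := by rw [hr, h.one_smul]
    _ = sm r (sm (Octo.comm p q) m) := mem_assocSet_iff.1 hm.1 r _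
    _ = 0 := by rw [h.comm_smul_eq_zero_of_mem_inter hm, h.smul_zero]

end IsOMod

/-- `𝒜(M) ∩ 𝒜⁻(M) = {0}`. -/
theorem stmt8 {M : Type*} [AddCommGroup M] [Module ℝ M]
    (sm : Octo → M → M) (h : IsOMod sm) :
    assocSet sm ∩ conjAssocSet sm = {0} :=
  Set.eq_singleton_iff_unique_mem.2
    ⟨⟨h.zero_mem_assocSet, h.zero_mem_conjAssocSet⟩, fun _ hm => h.eq_zero_of_mem_inter hm⟩
end
end

section
/- Every simple left 𝕆-module is isomorphic, as a left 𝕆-module, either to 𝕆 (with its own multiplication) or to 𝕆̄ (the octonions with scalar multiplication p ·̂ x := p̄x), and these two are not isomorphic to each other. -/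
noncomputable section

open scoped Quaternion

/-- A simple left 𝕆-module: nonzero, with no submodules other than `{0}` and the whole module. -/
def IsSimpleOMod {M : Type*} [AddCommGroup M] [Module ℝ M] (sm : Octo → M → M) : Prop :=
  (∃ m : M, m ≠ 0) ∧ ∀ S : Set M, IsOSubmodule sm S → S = {0} ∨ S = Set.univ

universe u

namespace OSimple
open Octo
@[simp] lemma p1_mk (a b : ℍ[ℝ]) : p1 (mk a b) = a := rfl
@[simp] lemma p2_mk (a b : ℍ[ℝ]) : p2 (mk a b) = b := rfl
@[simp] lemma p1_neg (x : Octo) : p1 (-x) = -p1 x := rfl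
@[simp] lemma p2_neg (x : Octo) : p2 (-x) = -p2 x := rfl
@[simp] lemma p1_add (x y : Octo) : p1 (x + y) = p1 x + p1 y := rfl
@[simp] lemma p2_add (x y : Octo) : p2 (x + y) = p2 x + p2 y := rfl
@[simp] lemma p1_sub (x y : Octo) : p1 (x - y) = p1 x - p1 y := rfl
@[simp] lemma p2_sub (x y : Octo) : p2 (x - y) = p2 x - p2 y := rfl
@[simp] lemma p1_smul (r : ℝ) (x : Octo) : p1 (r • x) = r • p1 x := rfl
@[simp] lemma p2_smul (r : ℝ) (x : Octo) : p2 (r • x) = r • p2 x := rfl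
@[simp] lemma p1_zero : p1 (0 : Octo) = 0 := rfl
@[simp] lemma p2_zero : p2 (0 : Octo) = 0 := rfl
@[simp] lemma p1_one : p1 (1 : Octo) = 1 := rfl
@[simp] lemma p2_one : p2 (1 : Octo) = 0 := rfl
lemma mul_def (x y : Octo) : x * y = mk (p1 x * p1 y - star (p2 y) * p2 x) (p2 y * p1 x + p2 x * star (p1 y)) := rfl
lemma oext {x y : Octo} (h1 : p1 x = p1 y) (h2 : p2 x = p2 y) : x = y := Prod.ext h1 h2
lemma oext_iff {x y : Octo} : x = y ↔ p1 x = p1 y ∧ p2 x = p2 y :=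
  ⟨fun h => by rw [h]; exact ⟨rfl, rfl⟩, fun h => oext h.1 h.2⟩

def qq (x : ℍ[ℝ,-1,0,-1]) : ℍ[ℝ] := x
@[simp] lemma qq_re (a b c d : ℝ) : (qq ⟨a,b,c,d⟩).re = a := rfl
@[simp] lemma qq_imI (a b c d : ℝ) : (qq ⟨a,b,c,d⟩).imI = b := rfl
@[simp] lemma qq_imJ (a b c d : ℝ) : (qq ⟨a,b,c,d⟩).imJ = c := rfl
@[simp] lemma qq_imK (a b c d : ℝ) : (qq ⟨a,b,c,d⟩).imK = d := rfl
def eo : Fin 8 → Octo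
  | ⟨0,_⟩ => Octo.mk (qq ⟨1,0,0,0⟩) 0
  | ⟨1,_⟩ => Octo.mk (qq ⟨0,1,0,0⟩) 0
  | ⟨2,_⟩ => Octo.mk (qq ⟨0,0,1,0⟩) 0
  | ⟨3,_⟩ => Octo.mk (qq ⟨0,0,0,1⟩) 0
  | ⟨4,_⟩ => Octo.mk 0 (qq ⟨1,0,0,0⟩)
  | ⟨5,_⟩ => Octo.mk 0 (qq ⟨0,1,0,0⟩)
  | ⟨6,_⟩ => Octo.mk 0 (qq ⟨0,0,1,0⟩)
  | ⟨7,_⟩ => Octo.mk 0 (qq ⟨0,0,0,1⟩)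
lemma eo0 : eo 0 = Octo.mk (qq ⟨1,0,0,0⟩) 0 := rfl
lemma eo1 : eo 1 = Octo.mk (qq ⟨0,1,0,0⟩) 0 := rfl
lemma eo2 : eo 2 = Octo.mk (qq ⟨0,0,1,0⟩) 0 := rfl
lemma eo3 : eo 3 = Octo.mk (qq ⟨0,0,0,1⟩) 0 := rfl
lemma eo4 : eo 4 = Octo.mk 0 (qq ⟨1,0,0,0⟩) := rfl
lemma eo5 : eo 5 = Octo.mk 0 (qq ⟨0,1,0,0⟩) := rfl
lemma eo6 : eo 6 = Octo.mk 0 (qq ⟨0,0,1,0⟩) := rfl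
lemma eo7 : eo 7 = Octo.mk 0 (qq ⟨0,0,0,1⟩) := rfl
lemma eo_zero : eo 0 = 1 := rfl

set_option maxHeartbeats 1000000 in
lemma octo_tac_test : eo 1 * eo 2 = eo 3 := by
  rw [eo1, eo2, eo3, mul_def]
  apply oext <;>
    simp [Quaternion.ext_iff, Quaternion.re_mul, Quaternion.imI_mul, Quaternion.imJ_mul,
      Quaternion.imK_mul]

lemma t00 : eo 0 * eo 0 = eo 0 := by
  rw [eo0, mul_def]
  apply oext <;>
    simp [Quaternion.ext_iff, Quaternion.re_mul, Quaternion.imI_mul, Quaternion.imJ_mul, Quaternion.imK_mul]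
lemma t01 : eo 0 * eo 1 = eo 1 := by
  rw [eo0, eo1, mul_def]
  apply oext <;>
    simp [Quaternion.ext_iff, Quaternion.re_mul, Quaternion.imI_mul, Quaternion.imJ_mul, Quaternion.imK_mul]
lemma t02 : eo 0 * eo 2 = eo 2 := by
  rw [eo0, eo2, mul_def]
  apply oext <;>
    simp [Quaternion.ext_iff, Quaternion.re_mul, Quaternion.imI_mul, Quaternion.imJ_mul, Quaternion.imK_mul]
lemma t03 : eo 0 * eo 3 = eo 3 := by
  rw [eo0, eo3, mul_def]
  apply oext <;>
    simp [Quaternion.ext_iff, Quaternion.re_mul, Quaternion.imI_mul, Quaternion.imJ_mul, Quaternion.imK_mul]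
lemma t04 : eo 0 * eo 4 = eo 4 := by
  rw [eo0, eo4, mul_def]
  apply oext <;>
    simp [Quaternion.ext_iff, Quaternion.re_mul, Quaternion.imI_mul, Quaternion.imJ_mul, Quaternion.imK_mul]
lemma t05 : eo 0 * eo 5 = eo 5 := by
  rw [eo0, eo5, mul_def]
  apply oext <;>
    simp [Quaternion.ext_iff, Quaternion.re_mul, Quaternion.imI_mul, Quaternion.imJ_mul, Quaternion.imK_mul]
lemma t06 : eo 0 * eo 6 = eo 6 := by
  rw [eo0, eo6, mul_def]
  apply oext <;>
    simp [Quaternion.ext_iff, Quaternion.re_mul, Quaternion.imI_mul, Quaternion.imJ_mul, Quaternion.imK_mul]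
lemma t07 : eo 0 * eo 7 = eo 7 := by
  rw [eo0, eo7, mul_def]
  apply oext <;>
    simp [Quaternion.ext_iff, Quaternion.re_mul, Quaternion.imI_mul, Quaternion.imJ_mul, Quaternion.imK_mul]
lemma t10 : eo 1 * eo 0 = eo 1 := by
  rw [eo0, eo1, mul_def]
  apply oext <;>
    simp [Quaternion.ext_iff, Quaternion.re_mul, Quaternion.imI_mul, Quaternion.imJ_mul, Quaternion.imK_mul]
lemma t11 : eo 1 * eo 1 = -eo 0 := by
  rw [eo0, eo1, mul_def]
  apply oext <;>
    simp [Quaternion.ext_iff, Quaternion.re_mul, Quaternion.imI_mul, Quaternion.imJ_mul, Quaternion.imK_mul]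
lemma t12 : eo 1 * eo 2 = eo 3 := by
  rw [eo1, eo2, eo3, mul_def]
  apply oext <;>
    simp [Quaternion.ext_iff, Quaternion.re_mul, Quaternion.imI_mul, Quaternion.imJ_mul, Quaternion.imK_mul]
lemma t13 : eo 1 * eo 3 = -eo 2 := by
  rw [eo1, eo2, eo3, mul_def]
  apply oext <;>
    simp [Quaternion.ext_iff, Quaternion.re_mul, Quaternion.imI_mul, Quaternion.imJ_mul, Quaternion.imK_mul]
lemma t14 : eo 1 * eo 4 = eo 5 := by
  rw [eo1, eo4, eo5, mul_def]
  apply oext <;>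
    simp [Quaternion.ext_iff, Quaternion.re_mul, Quaternion.imI_mul, Quaternion.imJ_mul, Quaternion.imK_mul]
lemma t15 : eo 1 * eo 5 = -eo 4 := by
  rw [eo1, eo4, eo5, mul_def]
  apply oext <;>
    simp [Quaternion.ext_iff, Quaternion.re_mul, Quaternion.imI_mul, Quaternion.imJ_mul, Quaternion.imK_mul]
lemma t16 : eo 1 * eo 6 = -eo 7 := by
  rw [eo1, eo6, eo7, mul_def]
  apply oext <;>
    simp [Quaternion.ext_iff, Quaternion.re_mul, Quaternion.imI_mul, Quaternion.imJ_mul, Quaternion.imK_mul]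
lemma t17 : eo 1 * eo 7 = eo 6 := by
  rw [eo1, eo6, eo7, mul_def]
  apply oext <;>
    simp [Quaternion.ext_iff, Quaternion.re_mul, Quaternion.imI_mul, Quaternion.imJ_mul, Quaternion.imK_mul]
lemma t20 : eo 2 * eo 0 = eo 2 := by
  rw [eo0, eo2, mul_def]
  apply oext <;>
    simp [Quaternion.ext_iff, Quaternion.re_mul, Quaternion.imI_mul, Quaternion.imJ_mul, Quaternion.imK_mul]
lemma t21 : eo 2 * eo 1 = -eo 3 := by
  rw [eo1, eo2, eo3, mul_def]
  apply oext <;>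
    simp [Quaternion.ext_iff, Quaternion.re_mul, Quaternion.imI_mul, Quaternion.imJ_mul, Quaternion.imK_mul]
lemma t22 : eo 2 * eo 2 = -eo 0 := by
  rw [eo0, eo2, mul_def]
  apply oext <;>
    simp [Quaternion.ext_iff, Quaternion.re_mul, Quaternion.imI_mul, Quaternion.imJ_mul, Quaternion.imK_mul]
lemma t23 : eo 2 * eo 3 = eo 1 := by
  rw [eo1, eo2, eo3, mul_def]
  apply oext <;>
    simp [Quaternion.ext_iff, Quaternion.re_mul, Quaternion.imI_mul, Quaternion.imJ_mul, Quaternion.imK_mul]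
lemma t24 : eo 2 * eo 4 = eo 6 := by
  rw [eo2, eo4, eo6, mul_def]
  apply oext <;>
    simp [Quaternion.ext_iff, Quaternion.re_mul, Quaternion.imI_mul, Quaternion.imJ_mul, Quaternion.imK_mul]
lemma t25 : eo 2 * eo 5 = eo 7 := by
  rw [eo2, eo5, eo7, mul_def]
  apply oext <;>
    simp [Quaternion.ext_iff, Quaternion.re_mul, Quaternion.imI_mul, Quaternion.imJ_mul, Quaternion.imK_mul]
lemma t26 : eo 2 * eo 6 = -eo 4 := by
  rw [eo2, eo4, eo6, mul_def]
  apply oext <;>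
    simp [Quaternion.ext_iff, Quaternion.re_mul, Quaternion.imI_mul, Quaternion.imJ_mul, Quaternion.imK_mul]
lemma t27 : eo 2 * eo 7 = -eo 5 := by
  rw [eo2, eo5, eo7, mul_def]
  apply oext <;>
    simp [Quaternion.ext_iff, Quaternion.re_mul, Quaternion.imI_mul, Quaternion.imJ_mul, Quaternion.imK_mul]
lemma t30 : eo 3 * eo 0 = eo 3 := by
  rw [eo0, eo3, mul_def]
  apply oext <;>
    simp [Quaternion.ext_iff, Quaternion.re_mul, Quaternion.imI_mul, Quaternion.imJ_mul, Quaternion.imK_mul]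
lemma t31 : eo 3 * eo 1 = eo 2 := by
  rw [eo1, eo2, eo3, mul_def]
  apply oext <;>
    simp [Quaternion.ext_iff, Quaternion.re_mul, Quaternion.imI_mul, Quaternion.imJ_mul, Quaternion.imK_mul]
lemma t32 : eo 3 * eo 2 = -eo 1 := by
  rw [eo1, eo2, eo3, mul_def]
  apply oext <;>
    simp [Quaternion.ext_iff, Quaternion.re_mul, Quaternion.imI_mul, Quaternion.imJ_mul, Quaternion.imK_mul]
lemma t33 : eo 3 * eo 3 = -eo 0 := by
  rw [eo0, eo3, mul_def]
  apply oext <;>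
    simp [Quaternion.ext_iff, Quaternion.re_mul, Quaternion.imI_mul, Quaternion.imJ_mul, Quaternion.imK_mul]
lemma t34 : eo 3 * eo 4 = eo 7 := by
  rw [eo3, eo4, eo7, mul_def]
  apply oext <;>
    simp [Quaternion.ext_iff, Quaternion.re_mul, Quaternion.imI_mul, Quaternion.imJ_mul, Quaternion.imK_mul]
lemma t35 : eo 3 * eo 5 = -eo 6 := by
  rw [eo3, eo5, eo6, mul_def]
  apply oext <;>
    simp [Quaternion.ext_iff, Quaternion.re_mul, Quaternion.imI_mul, Quaternion.imJ_mul, Quaternion.imK_mul]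
lemma t36 : eo 3 * eo 6 = eo 5 := by
  rw [eo3, eo5, eo6, mul_def]
  apply oext <;>
    simp [Quaternion.ext_iff, Quaternion.re_mul, Quaternion.imI_mul, Quaternion.imJ_mul, Quaternion.imK_mul]
lemma t37 : eo 3 * eo 7 = -eo 4 := by
  rw [eo3, eo4, eo7, mul_def]
  apply oext <;>
    simp [Quaternion.ext_iff, Quaternion.re_mul, Quaternion.imI_mul, Quaternion.imJ_mul, Quaternion.imK_mul]
lemma t40 : eo 4 * eo 0 = eo 4 := by
  rw [eo0, eo4, mul_def]
  apply oext <;>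
    simp [Quaternion.ext_iff, Quaternion.re_mul, Quaternion.imI_mul, Quaternion.imJ_mul, Quaternion.imK_mul]
lemma t41 : eo 4 * eo 1 = -eo 5 := by
  rw [eo1, eo4, eo5, mul_def]
  apply oext <;>
    simp [Quaternion.ext_iff, Quaternion.re_mul, Quaternion.imI_mul, Quaternion.imJ_mul, Quaternion.imK_mul]
lemma t42 : eo 4 * eo 2 = -eo 6 := by
  rw [eo2, eo4, eo6, mul_def]
  apply oext <;>
    simp [Quaternion.ext_iff, Quaternion.re_mul, Quaternion.imI_mul, Quaternion.imJ_mul, Quaternion.imK_mul]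
lemma t43 : eo 4 * eo 3 = -eo 7 := by
  rw [eo3, eo4, eo7, mul_def]
  apply oext <;>
    simp [Quaternion.ext_iff, Quaternion.re_mul, Quaternion.imI_mul, Quaternion.imJ_mul, Quaternion.imK_mul]
lemma t44 : eo 4 * eo 4 = -eo 0 := by
  rw [eo0, eo4, mul_def]
  apply oext <;>
    simp [Quaternion.ext_iff, Quaternion.re_mul, Quaternion.imI_mul, Quaternion.imJ_mul, Quaternion.imK_mul]
lemma t45 : eo 4 * eo 5 = eo 1 := by
  rw [eo1, eo4, eo5, mul_def]
  apply oext <;>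
    simp [Quaternion.ext_iff, Quaternion.re_mul, Quaternion.imI_mul, Quaternion.imJ_mul, Quaternion.imK_mul]
lemma t46 : eo 4 * eo 6 = eo 2 := by
  rw [eo2, eo4, eo6, mul_def]
  apply oext <;>
    simp [Quaternion.ext_iff, Quaternion.re_mul, Quaternion.imI_mul, Quaternion.imJ_mul, Quaternion.imK_mul]
lemma t47 : eo 4 * eo 7 = eo 3 := by
  rw [eo3, eo4, eo7, mul_def]
  apply oext <;>
    simp [Quaternion.ext_iff, Quaternion.re_mul, Quaternion.imI_mul, Quaternion.imJ_mul, Quaternion.imK_mul]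
lemma t50 : eo 5 * eo 0 = eo 5 := by
  rw [eo0, eo5, mul_def]
  apply oext <;>
    simp [Quaternion.ext_iff, Quaternion.re_mul, Quaternion.imI_mul, Quaternion.imJ_mul, Quaternion.imK_mul]
lemma t51 : eo 5 * eo 1 = eo 4 := by
  rw [eo1, eo4, eo5, mul_def]
  apply oext <;>
    simp [Quaternion.ext_iff, Quaternion.re_mul, Quaternion.imI_mul, Quaternion.imJ_mul, Quaternion.imK_mul]
lemma t52 : eo 5 * eo 2 = -eo 7 := by
  rw [eo2, eo5, eo7, mul_def]
  apply oext <;>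
    simp [Quaternion.ext_iff, Quaternion.re_mul, Quaternion.imI_mul, Quaternion.imJ_mul, Quaternion.imK_mul]
lemma t53 : eo 5 * eo 3 = eo 6 := by
  rw [eo3, eo5, eo6, mul_def]
  apply oext <;>
    simp [Quaternion.ext_iff, Quaternion.re_mul, Quaternion.imI_mul, Quaternion.imJ_mul, Quaternion.imK_mul]
lemma t54 : eo 5 * eo 4 = -eo 1 := by
  rw [eo1, eo4, eo5, mul_def]
  apply oext <;>
    simp [Quaternion.ext_iff, Quaternion.re_mul, Quaternion.imI_mul, Quaternion.imJ_mul, Quaternion.imK_mul]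
lemma t55 : eo 5 * eo 5 = -eo 0 := by
  rw [eo0, eo5, mul_def]
  apply oext <;>
    simp [Quaternion.ext_iff, Quaternion.re_mul, Quaternion.imI_mul, Quaternion.imJ_mul, Quaternion.imK_mul]
lemma t56 : eo 5 * eo 6 = -eo 3 := by
  rw [eo3, eo5, eo6, mul_def]
  apply oext <;>
    simp [Quaternion.ext_iff, Quaternion.re_mul, Quaternion.imI_mul, Quaternion.imJ_mul, Quaternion.imK_mul]
lemma t57 : eo 5 * eo 7 = eo 2 := by
  rw [eo2, eo5, eo7, mul_def]
  apply oext <;>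
    simp [Quaternion.ext_iff, Quaternion.re_mul, Quaternion.imI_mul, Quaternion.imJ_mul, Quaternion.imK_mul]
lemma t60 : eo 6 * eo 0 = eo 6 := by
  rw [eo0, eo6, mul_def]
  apply oext <;>
    simp [Quaternion.ext_iff, Quaternion.re_mul, Quaternion.imI_mul, Quaternion.imJ_mul, Quaternion.imK_mul]
lemma t61 : eo 6 * eo 1 = eo 7 := by
  rw [eo1, eo6, eo7, mul_def]
  apply oext <;>
    simp [Quaternion.ext_iff, Quaternion.re_mul, Quaternion.imI_mul, Quaternion.imJ_mul, Quaternion.imK_mul]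
lemma t62 : eo 6 * eo 2 = eo 4 := by
  rw [eo2, eo4, eo6, mul_def]
  apply oext <;>
    simp [Quaternion.ext_iff, Quaternion.re_mul, Quaternion.imI_mul, Quaternion.imJ_mul, Quaternion.imK_mul]
lemma t63 : eo 6 * eo 3 = -eo 5 := by
  rw [eo3, eo5, eo6, mul_def]
  apply oext <;>
    simp [Quaternion.ext_iff, Quaternion.re_mul, Quaternion.imI_mul, Quaternion.imJ_mul, Quaternion.imK_mul]
lemma t64 : eo 6 * eo 4 = -eo 2 := by
  rw [eo2, eo4, eo6, mul_def]
  apply oext <;>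
    simp [Quaternion.ext_iff, Quaternion.re_mul, Quaternion.imI_mul, Quaternion.imJ_mul, Quaternion.imK_mul]
lemma t65 : eo 6 * eo 5 = eo 3 := by
  rw [eo3, eo5, eo6, mul_def]
  apply oext <;>
    simp [Quaternion.ext_iff, Quaternion.re_mul, Quaternion.imI_mul, Quaternion.imJ_mul, Quaternion.imK_mul]
lemma t66 : eo 6 * eo 6 = -eo 0 := by
  rw [eo0, eo6, mul_def]
  apply oext <;>
    simp [Quaternion.ext_iff, Quaternion.re_mul, Quaternion.imI_mul, Quaternion.imJ_mul, Quaternion.imK_mul]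
lemma t67 : eo 6 * eo 7 = -eo 1 := by
  rw [eo1, eo6, eo7, mul_def]
  apply oext <;>
    simp [Quaternion.ext_iff, Quaternion.re_mul, Quaternion.imI_mul, Quaternion.imJ_mul, Quaternion.imK_mul]
lemma t70 : eo 7 * eo 0 = eo 7 := by
  rw [eo0, eo7, mul_def]
  apply oext <;>
    simp [Quaternion.ext_iff, Quaternion.re_mul, Quaternion.imI_mul, Quaternion.imJ_mul, Quaternion.imK_mul]
lemma t71 : eo 7 * eo 1 = -eo 6 := by
  rw [eo1, eo6, eo7, mul_def]
  apply oext <;>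
    simp [Quaternion.ext_iff, Quaternion.re_mul, Quaternion.imI_mul, Quaternion.imJ_mul, Quaternion.imK_mul]
lemma t72 : eo 7 * eo 2 = eo 5 := by
  rw [eo2, eo5, eo7, mul_def]
  apply oext <;>
    simp [Quaternion.ext_iff, Quaternion.re_mul, Quaternion.imI_mul, Quaternion.imJ_mul, Quaternion.imK_mul]
lemma t73 : eo 7 * eo 3 = eo 4 := by
  rw [eo3, eo4, eo7, mul_def]
  apply oext <;>
    simp [Quaternion.ext_iff, Quaternion.re_mul, Quaternion.imI_mul, Quaternion.imJ_mul, Quaternion.imK_mul]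
lemma t74 : eo 7 * eo 4 = -eo 3 := by
  rw [eo3, eo4, eo7, mul_def]
  apply oext <;>
    simp [Quaternion.ext_iff, Quaternion.re_mul, Quaternion.imI_mul, Quaternion.imJ_mul, Quaternion.imK_mul]
lemma t75 : eo 7 * eo 5 = -eo 2 := by
  rw [eo2, eo5, eo7, mul_def]
  apply oext <;>
    simp [Quaternion.ext_iff, Quaternion.re_mul, Quaternion.imI_mul, Quaternion.imJ_mul, Quaternion.imK_mul]
lemma t76 : eo 7 * eo 6 = eo 1 := by
  rw [eo1, eo6, eo7, mul_def]
  apply oext <;>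
    simp [Quaternion.ext_iff, Quaternion.re_mul, Quaternion.imI_mul, Quaternion.imJ_mul, Quaternion.imK_mul]
lemma t77 : eo 7 * eo 7 = -eo 0 := by
  rw [eo0, eo7, mul_def]
  apply oext <;>
    simp [Quaternion.ext_iff, Quaternion.re_mul, Quaternion.imI_mul, Quaternion.imJ_mul, Quaternion.imK_mul]
end OSimple

namespace OSimple
open Octo

lemma add_mul_o (x y z : Octo) : (x + y) * z = x * z + y * z := by
  apply oext <;> simp [mul_def, mul_add, add_mul] <;> first | rfl | abel | noncomm_ring
lemma mul_add_o (x y z : Octo) : x * (y + z) = x * y + x * z := by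
  apply oext <;> simp [mul_def, mul_add, add_mul, star_add] <;> first | rfl | abel | noncomm_ring
lemma smul_mul_o (r : ℝ) (x y : Octo) : (r • x) * y = r • (x * y) := by
  apply oext <;> simp [mul_def, smul_sub, smul_add, smul_mul_assoc, mul_smul_comm]
lemma mul_smul_o (r : ℝ) (x y : Octo) : x * (r • y) = r • (x * y) := by
  apply oext <;> simp [mul_def, smul_sub, smul_add, smul_mul_assoc, mul_smul_comm, star_smul]
lemma neg_mul_o (x y : Octo) : (-x) * y = -(x * y) := by
  apply oext <;> simp [mul_def] <;> first | rfl | abel | noncomm_ring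
lemma mul_neg_o (x y : Octo) : x * (-y) = -(x * y) := by
  apply oext <;> simp [mul_def] <;> first | rfl | abel | noncomm_ring
lemma one_mul_o (x : Octo) : 1 * x = x := by
  apply oext <;> simp [mul_def]
lemma mul_one_o (x : Octo) : x * 1 = x := by
  apply oext <;> simp [mul_def]
lemma zero_mul_o (x : Octo) : (0 : Octo) * x = 0 := by
  apply oext <;> simp [mul_def]
lemma mul_zero_o (x : Octo) : x * (0 : Octo) = 0 := by
  apply oext <;> simp [mul_def]

/-- Octonion multiplication as a bilinear map. -/
def oMulL : Octo →ₗ[ℝ] Octo →ₗ[ℝ] Octo :=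
  LinearMap.mk₂ ℝ (· * ·) add_mul_o smul_mul_o mul_add_o mul_smul_o

lemma oMulL_apply (x y : Octo) : oMulL x y = x * y := rfl

lemma conj_mul_o (x y : Octo) : Octo.conj (x * y) = Octo.conj y * Octo.conj x := by
  apply oext <;> simp [Octo.conj, mul_def, star_mul, star_sub, star_add] <;> first | rfl | abel | noncomm_ring
lemma conj_conj_o (x : Octo) : Octo.conj (Octo.conj x) = x := by
  apply oext <;> simp [Octo.conj]
lemma conj_one_o : Octo.conj (1 : Octo) = 1 := by
  apply oext <;> simp [Octo.conj]
lemma conj_add_o (x y : Octo) : Octo.conj (x + y) = Octo.conj x + Octo.conj y := by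
  apply oext <;> simp [Octo.conj, star_add] <;> abel
lemma conj_smul_o (r : ℝ) (x : Octo) : Octo.conj (r • x) = r • Octo.conj x := by
  apply oext <;> simp [Octo.conj, star_smul]
lemma conj_neg_o (x : Octo) : Octo.conj (-x) = -Octo.conj x := by
  apply oext <;> simp [Octo.conj]

/-- The norm of an octonion. -/
def onorm (x : Octo) : ℝ := Quaternion.normSq (p1 x) + Quaternion.normSq (p2 x)

lemma smul_one_q (r : ℝ) : r • (1 : ℍ[ℝ]) = (r : ℍ[ℝ]) := by
  ext <;> simp

lemma conj_mul_self_o (x : Octo) : Octo.conj x * x = onorm x • (1 : Octo) := by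
  apply oext <;>
    simp [Octo.conj, mul_def, onorm, smul_one_q, Quaternion.star_mul_self, Quaternion.self_mul_star, star_star] <;>
    push_cast [Quaternion.coe_add] <;> first | rfl | abel | noncomm_ring
lemma mul_conj_self_o (x : Octo) : x * Octo.conj x = onorm x • (1 : Octo) := by
  apply oext <;>
    simp [Octo.conj, mul_def, onorm, smul_one_q, Quaternion.star_mul_self, Quaternion.self_mul_star, star_star] <;>
    push_cast [Quaternion.coe_add] <;> first | rfl | abel | noncomm_ring

lemma onorm_eq_zero {x : Octo} (h : onorm x = 0) : x = 0 := by
  have hg1 := Quaternion.normSq_nonneg (a := p1 x)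
  have hg2 := Quaternion.normSq_nonneg (a := p2 x)
  unfold onorm at h
  have hn1 : Quaternion.normSq (p1 x) = 0 := by linarith
  have hn2 : Quaternion.normSq (p2 x) = 0 := by linarith
  apply oext
  · simpa [Quaternion.normSq_eq_zero] using hn1
  · simpa [Quaternion.normSq_eq_zero] using hn2

lemma one_ne_zero_o : (1 : Octo) ≠ 0 := by
  intro h
  have := congrArg (fun z => (p1 z).re) h
  simpa using this

/-- Coordinates of an octonion. -/
def co (x : Octo) : Fin 8 → ℝ
  | ⟨0,_⟩ => (p1 x).re
  | ⟨1,_⟩ => (p1 x).imI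
  | ⟨2,_⟩ => (p1 x).imJ
  | ⟨3,_⟩ => (p1 x).imK
  | ⟨4,_⟩ => (p2 x).re
  | ⟨5,_⟩ => (p2 x).imI
  | ⟨6,_⟩ => (p2 x).imJ
  | ⟨7,_⟩ => (p2 x).imK

lemma expand_o (x : Octo) : x = ∑ i : Fin 8, co x i • eo i := by
  rw [Fin.sum_univ_eight]
  show x = co x 0 • eo 0 + co x 1 • eo 1 + co x 2 • eo 2 + co x 3 • eo 3 + co x 4 • eo 4 +
    co x 5 • eo 5 + co x 6 • eo 6 + co x 7 • eo 7
  simp only [co, eo0, eo1, eo2, eo3, eo4, eo5, eo6, eo7]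
  apply oext <;> ext <;> simp

set_option linter.unreachableTactic false in
set_option linter.unusedTactic false in
set_option maxHeartbeats 1000000 in
lemma chain_o (x : Octo) :
    eo 1 * (eo 2 * (eo 3 * (eo 4 * (eo 5 * (eo 6 * (eo 7 * x)))))) = -x := by
  apply oext <;>
    simp [eo1, eo2, eo3, eo4, eo5, eo6, eo7, mul_def, Quaternion.ext_iff, Quaternion.re_mul,
      Quaternion.imI_mul, Quaternion.imJ_mul, Quaternion.imK_mul] <;>
    norm_num

end OSimple

namespace OSimple
open Octo

section OModLemmas
variable {M : Type*} [AddCommGroup M] [Module ℝ M] {sm : Octo → M → M}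

/-- The scalar multiplication as a bilinear map. -/
def smL (h : IsOMod sm) : Octo →ₗ[ℝ] M →ₗ[ℝ] M :=
  LinearMap.mk₂ ℝ sm h.add_smul h.real_smul h.smul_add h.smul_real

lemma smL_apply (h : IsOMod sm) (p : Octo) (m : M) : smL h p m = sm p m := rfl

lemma sm_zero_right (h : IsOMod sm) (p : Octo) : sm p (0 : M) = 0 := map_zero (smL h p)
lemma sm_neg_right (h : IsOMod sm) (p : Octo) (m : M) : sm p (-m) = -(sm p m) := map_neg (smL h p) m
lemma sm_sub_right (h : IsOMod sm) (p : Octo) (x y : M) : sm p (x - y) = sm p x - sm p y := map_sub (smL h p) x y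
lemma sm_zero_left (h : IsOMod sm) (m : M) : sm (0 : Octo) m = 0 := by
  have := map_zero ((smL h).flip m); simpa only [LinearMap.flip_apply, smL_apply] using this
lemma sm_neg_left (h : IsOMod sm) (p : Octo) (m : M) : sm (-p) m = -(sm p m) := by
  have := map_neg ((smL h).flip m) p; simpa only [LinearMap.flip_apply, smL_apply] using this
lemma sm_one (h : IsOMod sm) (m : M) : sm 1 m = m := h.one_smul m
lemma sm_e0 (h : IsOMod sm) (m : M) : sm (eo 0) m = m := by rw [eo_zero]; exact h.one_smul m

lemma rrel (h : IsOMod sm) (p q : Octo) (m : M) :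
    sm (p*q) m + sm (q*p) m = sm p (sm q m) + sm q (sm p m) := by
  have h1 := h.alt p q m
  apply eq_of_sub_eq_zero
  rw [show sm (p*q) m + sm (q*p) m - (sm p (sm q m) + sm q (sm p m))
      = (sm (p*q) m - sm p (sm q m)) + (sm (q*p) m - sm q (sm p m)) by abel, h1]
  abel

lemma ac_of (h : IsOMod sm) {p q : Octo} (hpq : p * q + q * p = 0) :
    ∀ m : M, sm p (sm q m) = -(sm q (sm p m)) := by
  intro m
  have h1 := rrel h p q m
  have h2 : sm (p*q) m + sm (q*p) m = 0 := by
    rw [← h.add_smul, hpq, sm_zero_left h]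
  rw [h2] at h1
  exact eq_neg_of_add_eq_zero_left h1.symm

lemma half_cancel {x y : M} (hxy : x + x = y + y) : x = y := by
  have h2 : (2:ℝ) • x = (2:ℝ) • y := by rw [two_smul, two_smul]; exact hxy
  have := congrArg (fun z => (2:ℝ)⁻¹ • z) h2
  simpa [smul_smul] using this

lemma sq_of (h : IsOMod sm) {p : Octo} (hp : p * p = -1) :
    ∀ m : M, sm p (sm p m) = -m := by
  intro m
  have h1 := rrel h p p m
  have h2 : sm (p*p) m = -m := by
    rw [hp, show (-1 : Octo) = -(1:Octo) from rfl, sm_neg_left h, sm_one h]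
  rw [h2] at h1
  exact (half_cancel h1).symm

lemma cyc (h : IsOMod sm) {x y z : Octo} {b : M}
    (acxy : ∀ m : M, sm x (sm y m) = -(sm y (sm x m)))
    (sqy : ∀ m : M, sm y (sm y m) = -m)
    (core : sm x (sm y b) = sm z b) : sm y (sm z b) = sm x b := by
  have hflip : ∀ m : M, sm y (sm x m) = -(sm x (sm y m)) := fun m => by rw [acxy m, neg_neg]
  calc sm y (sm z b) = sm y (sm x (sm y b)) := by rw [core]
    _ = -(sm x (sm y (sm y b))) := hflip _
    _ = -(sm x (-b)) := by rw [sqy]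
    _ = sm x b := by rw [sm_neg_right h, neg_neg]

lemma negfact (h : IsOMod sm) {x y z : Octo} {b : M}
    (acxy : ∀ m : M, sm x (sm y m) = -(sm y (sm x m)))
    (core : sm x (sm y b) = sm z b) : sm y (sm x b) = -(sm z b) := by
  rw [← core, acxy, neg_neg]
lemma ac12 (h : IsOMod sm) : ∀ m : M, sm (eo 1) (sm (eo 2) m) = -(sm (eo 2) (sm (eo 1) m)) :=
  ac_of h (by rw [t12, t21]; abel)
lemma ac13 (h : IsOMod sm) : ∀ m : M, sm (eo 1) (sm (eo 3) m) = -(sm (eo 3) (sm (eo 1) m)) :=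
  ac_of h (by rw [t13, t31]; abel)
lemma ac14 (h : IsOMod sm) : ∀ m : M, sm (eo 1) (sm (eo 4) m) = -(sm (eo 4) (sm (eo 1) m)) :=
  ac_of h (by rw [t14, t41]; abel)
lemma ac15 (h : IsOMod sm) : ∀ m : M, sm (eo 1) (sm (eo 5) m) = -(sm (eo 5) (sm (eo 1) m)) :=
  ac_of h (by rw [t15, t51]; abel)
lemma ac16 (h : IsOMod sm) : ∀ m : M, sm (eo 1) (sm (eo 6) m) = -(sm (eo 6) (sm (eo 1) m)) :=
  ac_of h (by rw [t16, t61]; abel)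
lemma ac17 (h : IsOMod sm) : ∀ m : M, sm (eo 1) (sm (eo 7) m) = -(sm (eo 7) (sm (eo 1) m)) :=
  ac_of h (by rw [t17, t71]; abel)
lemma ac23 (h : IsOMod sm) : ∀ m : M, sm (eo 2) (sm (eo 3) m) = -(sm (eo 3) (sm (eo 2) m)) :=
  ac_of h (by rw [t23, t32]; abel)
lemma ac24 (h : IsOMod sm) : ∀ m : M, sm (eo 2) (sm (eo 4) m) = -(sm (eo 4) (sm (eo 2) m)) :=
  ac_of h (by rw [t24, t42]; abel)
lemma ac25 (h : IsOMod sm) : ∀ m : M, sm (eo 2) (sm (eo 5) m) = -(sm (eo 5) (sm (eo 2) m)) :=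
  ac_of h (by rw [t25, t52]; abel)
lemma ac26 (h : IsOMod sm) : ∀ m : M, sm (eo 2) (sm (eo 6) m) = -(sm (eo 6) (sm (eo 2) m)) :=
  ac_of h (by rw [t26, t62]; abel)
lemma ac27 (h : IsOMod sm) : ∀ m : M, sm (eo 2) (sm (eo 7) m) = -(sm (eo 7) (sm (eo 2) m)) :=
  ac_of h (by rw [t27, t72]; abel)
lemma ac34 (h : IsOMod sm) : ∀ m : M, sm (eo 3) (sm (eo 4) m) = -(sm (eo 4) (sm (eo 3) m)) :=
  ac_of h (by rw [t34, t43]; abel)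
lemma ac35 (h : IsOMod sm) : ∀ m : M, sm (eo 3) (sm (eo 5) m) = -(sm (eo 5) (sm (eo 3) m)) :=
  ac_of h (by rw [t35, t53]; abel)
lemma ac36 (h : IsOMod sm) : ∀ m : M, sm (eo 3) (sm (eo 6) m) = -(sm (eo 6) (sm (eo 3) m)) :=
  ac_of h (by rw [t36, t63]; abel)
lemma ac37 (h : IsOMod sm) : ∀ m : M, sm (eo 3) (sm (eo 7) m) = -(sm (eo 7) (sm (eo 3) m)) :=
  ac_of h (by rw [t37, t73]; abel)
lemma ac45 (h : IsOMod sm) : ∀ m : M, sm (eo 4) (sm (eo 5) m) = -(sm (eo 5) (sm (eo 4) m)) :=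
  ac_of h (by rw [t45, t54]; abel)
lemma ac46 (h : IsOMod sm) : ∀ m : M, sm (eo 4) (sm (eo 6) m) = -(sm (eo 6) (sm (eo 4) m)) :=
  ac_of h (by rw [t46, t64]; abel)
lemma ac47 (h : IsOMod sm) : ∀ m : M, sm (eo 4) (sm (eo 7) m) = -(sm (eo 7) (sm (eo 4) m)) :=
  ac_of h (by rw [t47, t74]; abel)
lemma ac56 (h : IsOMod sm) : ∀ m : M, sm (eo 5) (sm (eo 6) m) = -(sm (eo 6) (sm (eo 5) m)) :=
  ac_of h (by rw [t56, t65]; abel)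
lemma ac57 (h : IsOMod sm) : ∀ m : M, sm (eo 5) (sm (eo 7) m) = -(sm (eo 7) (sm (eo 5) m)) :=
  ac_of h (by rw [t57, t75]; abel)
lemma ac67 (h : IsOMod sm) : ∀ m : M, sm (eo 6) (sm (eo 7) m) = -(sm (eo 7) (sm (eo 6) m)) :=
  ac_of h (by rw [t67, t76]; abel)
lemma sq1 (h : IsOMod sm) : ∀ m : M, sm (eo 1) (sm (eo 1) m) = -m :=
  sq_of h (by rw [t11, eo_zero])
lemma sq2 (h : IsOMod sm) : ∀ m : M, sm (eo 2) (sm (eo 2) m) = -m :=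
  sq_of h (by rw [t22, eo_zero])
lemma sq3 (h : IsOMod sm) : ∀ m : M, sm (eo 3) (sm (eo 3) m) = -m :=
  sq_of h (by rw [t33, eo_zero])
lemma sq4 (h : IsOMod sm) : ∀ m : M, sm (eo 4) (sm (eo 4) m) = -m :=
  sq_of h (by rw [t44, eo_zero])
lemma sq5 (h : IsOMod sm) : ∀ m : M, sm (eo 5) (sm (eo 5) m) = -m :=
  sq_of h (by rw [t55, eo_zero])
lemma sq6 (h : IsOMod sm) : ∀ m : M, sm (eo 6) (sm (eo 6) m) = -m :=
  sq_of h (by rw [t66, eo_zero])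
lemma sq7 (h : IsOMod sm) : ∀ m : M, sm (eo 7) (sm (eo 7) m) = -m :=
  sq_of h (by rw [t77, eo_zero])

end OModLemmas
end OSimple

namespace OSimple
open Octo
section T
variable {M : Type*} [AddCommGroup M] [Module ℝ M] {sm : Octo → M → M}

lemma sm_finsum_left (h : IsOMod sm) (f : Fin 8 → Octo) (m : M) :
    sm (∑ i, f i) m = ∑ i, sm (f i) m := by
  simpa only [LinearMap.flip_apply, smL_apply] using map_sum ((smL h).flip m) f Finset.univ
lemma sm_finsum_right (h : IsOMod sm) (p : Octo) (g : Fin 8 → M) :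
    sm p (∑ i, g i) = ∑ i, sm p (g i) := by
  simpa only [smL_apply] using map_sum (smL h p) g Finset.univ
lemma mul_finsum_o (x : Octo) (f : Fin 8 → Octo) : x * (∑ i, f i) = ∑ i, x * f i := by
  simpa only [oMulL_apply] using map_sum (oMulL x) f Finset.univ
lemma finsum_mul_o (f : Fin 8 → Octo) (y : Octo) : (∑ i, f i) * y = ∑ i, f i * y := by
  simpa only [LinearMap.flip_apply, oMulL_apply] using map_sum (oMulL.flip y) f Finset.univ

lemma mul_expand_o (p q : Octo) :
    p * q = ∑ i : Fin 8, ∑ j : Fin 8, (co p i * co q j) • (eo i * eo j) := by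
  conv_lhs => rw [expand_o p, expand_o q]
  rw [finsum_mul_o]
  refine Finset.sum_congr rfl fun i _ => ?_
  rw [smul_mul_o, mul_finsum_o, Finset.smul_sum]
  refine Finset.sum_congr rfl fun j _ => ?_
  rw [mul_smul_o, smul_smul]

end T
end OSimple

namespace OSimple
open Octo
section Core
variable {M : Type*} [AddCommGroup M] [Module ℝ M] {sm : Octo → M → M}

lemma fin8cases (i : Fin 8) : i = 0 ∨ i = 1 ∨ i = 2 ∨ i = 3 ∨ i = 4 ∨ i = 5 ∨ i = 6 ∨ i = 7 := by
  revert i; decide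

set_option maxHeartbeats 4000000 in
theorem core_to_assoc (h : IsOMod sm)
    (hom : ∀ m : M, sm (eo 1) (sm (eo 2) (sm (eo 3) (sm (eo 4) (sm (eo 5) (sm (eo 6) (sm (eo 7) m)))))) = -m)
    {b : M}
    (fa : sm (eo 3) (sm (eo 2) b) = -(sm (eo 1) b))
    (fb : sm (eo 5) (sm (eo 4) b) = -(sm (eo 1) b))
    (fc : sm (eo 6) (sm (eo 4) b) = -(sm (eo 2) b)) :
    ∀ p q : Octo, sm (p * q) b = sm p (sm q b) := by
  have ac31f : ∀ m : M, sm (eo 3) (sm (eo 1) m) = -(sm (eo 1) (sm (eo 3) m)) := fun m => by rw [ac13 h, neg_neg]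
  have ac51f : ∀ m : M, sm (eo 5) (sm (eo 1) m) = -(sm (eo 1) (sm (eo 5) m)) := fun m => by rw [ac15 h, neg_neg]
  have ac53f : ∀ m : M, sm (eo 5) (sm (eo 3) m) = -(sm (eo 3) (sm (eo 5) m)) := fun m => by rw [ac35 h, neg_neg]
  have ac61f : ∀ m : M, sm (eo 6) (sm (eo 1) m) = -(sm (eo 1) (sm (eo 6) m)) := fun m => by rw [ac16 h, neg_neg]
  have ac62f : ∀ m : M, sm (eo 6) (sm (eo 2) m) = -(sm (eo 2) (sm (eo 6) m)) := fun m => by rw [ac26 h, neg_neg]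
  have ac65f : ∀ m : M, sm (eo 6) (sm (eo 5) m) = -(sm (eo 5) (sm (eo 6) m)) := fun m => by rw [ac56 h, neg_neg]
  have ac72f : ∀ m : M, sm (eo 7) (sm (eo 2) m) = -(sm (eo 2) (sm (eo 7) m)) := fun m => by rw [ac27 h, neg_neg]
  have ac73f : ∀ m : M, sm (eo 7) (sm (eo 3) m) = -(sm (eo 3) (sm (eo 7) m)) := fun m => by rw [ac37 h, neg_neg]
  have ac76f : ∀ m : M, sm (eo 7) (sm (eo 6) m) = -(sm (eo 6) (sm (eo 7) m)) := fun m => by rw [ac67 h, neg_neg]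
  have c_23 : sm (eo 2) (sm (eo 3) b) = sm (eo 1) b := by rw [ac23 h, fa, neg_neg]
  have c_31 : sm (eo 3) (sm (eo 1) b) = sm (eo 2) b := cyc h (ac23 h) (sq3 h) c_23
  have c_12 : sm (eo 1) (sm (eo 2) b) = sm (eo 3) b := cyc h ac31f (sq1 h) c_31
  have n_32 : sm (eo 3) (sm (eo 2) b) = -(sm (eo 1) b) := negfact h (ac23 h) c_23
  have n_13 : sm (eo 1) (sm (eo 3) b) = -(sm (eo 2) b) := negfact h ac31f c_31
  have n_21 : sm (eo 2) (sm (eo 1) b) = -(sm (eo 3) b) := negfact h (ac12 h) c_12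
  have c_45 : sm (eo 4) (sm (eo 5) b) = sm (eo 1) b := by rw [ac45 h, fb, neg_neg]
  have c_51 : sm (eo 5) (sm (eo 1) b) = sm (eo 4) b := cyc h (ac45 h) (sq5 h) c_45
  have c_14 : sm (eo 1) (sm (eo 4) b) = sm (eo 5) b := cyc h ac51f (sq1 h) c_51
  have n_54 : sm (eo 5) (sm (eo 4) b) = -(sm (eo 1) b) := negfact h (ac45 h) c_45
  have n_15 : sm (eo 1) (sm (eo 5) b) = -(sm (eo 4) b) := negfact h ac51f c_51
  have n_41 : sm (eo 4) (sm (eo 1) b) = -(sm (eo 5) b) := negfact h (ac14 h) c_14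
  have c_46 : sm (eo 4) (sm (eo 6) b) = sm (eo 2) b := by rw [ac46 h, fc, neg_neg]
  have c_62 : sm (eo 6) (sm (eo 2) b) = sm (eo 4) b := cyc h (ac46 h) (sq6 h) c_46
  have c_24 : sm (eo 2) (sm (eo 4) b) = sm (eo 6) b := cyc h ac62f (sq2 h) c_62
  have n_64 : sm (eo 6) (sm (eo 4) b) = -(sm (eo 2) b) := negfact h (ac46 h) c_46
  have n_26 : sm (eo 2) (sm (eo 6) b) = -(sm (eo 4) b) := negfact h ac62f c_62
  have n_42 : sm (eo 4) (sm (eo 2) b) = -(sm (eo 6) b) := negfact h (ac24 h) c_24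
  have HH1 : sm (eo 7) (sm (eo 6) (sm (eo 1) (b))) = -b := by
    have hh := hom (b)
    simp only [ac12 h, ac13 h, ac14 h, ac15 h, ac16 h, ac17 h, ac23 h, ac24 h, ac25 h, ac26 h, ac27 h, ac34 h, ac35 h, ac36 h, ac37 h, ac45 h, ac46 h, ac47 h, ac56 h, ac57 h, ac67 h, sq1 h, sq2 h, sq3 h, sq4 h, sq5 h, sq6 h, sq7 h, sm_neg_right h, neg_neg, neg_inj, c_31, n_32, n_21, c_51, n_54, n_41, c_62, n_64, n_42] at hh
    exact hh
  have c_61 : sm (eo 6) (sm (eo 1) b) = sm (eo 7) b := by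
    have hh := congrArg (sm (eo 7)) HH1
    simp only [ac12 h, ac13 h, ac14 h, ac15 h, ac16 h, ac17 h, ac23 h, ac24 h, ac25 h, ac26 h, ac27 h, ac34 h, ac35 h, ac36 h, ac37 h, ac45 h, ac46 h, ac47 h, ac56 h, ac57 h, ac67 h, sq1 h, sq2 h, sq3 h, sq4 h, sq5 h, sq6 h, sq7 h, sm_neg_right h, neg_neg, neg_inj, c_31, n_32, n_21, c_51, n_54, n_41, c_62, n_64, n_42] at hh
    exact hh
  have c_17 : sm (eo 1) (sm (eo 7) b) = sm (eo 6) b := cyc h ac61f (sq1 h) c_61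
  have c_76 : sm (eo 7) (sm (eo 6) b) = sm (eo 1) b := cyc h (ac17 h) (sq7 h) c_17
  have n_16 : sm (eo 1) (sm (eo 6) b) = -(sm (eo 7) b) := negfact h ac61f c_61
  have n_71 : sm (eo 7) (sm (eo 1) b) = -(sm (eo 6) b) := negfact h (ac17 h) c_17
  have n_67 : sm (eo 6) (sm (eo 7) b) = -(sm (eo 1) b) := negfact h ac76f c_76
  have HH2 : sm (eo 7) (sm (eo 2) (b)) = sm (eo 5) (b) := by
    have hh := congrArg (fun x : M => sm (eo 1) (x)) (hom (sm (eo 1) (sm (eo 5) (b))))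
    simp only [ac12 h, ac13 h, ac14 h, ac15 h, ac16 h, ac17 h, ac23 h, ac24 h, ac25 h, ac26 h, ac27 h, ac34 h, ac35 h, ac36 h, ac37 h, ac45 h, ac46 h, ac47 h, ac56 h, ac57 h, ac67 h, sq1 h, sq2 h, sq3 h, sq4 h, sq5 h, sq6 h, sq7 h, sm_neg_right h, neg_neg, neg_inj, c_31, n_32, n_21, c_51, n_54, n_41, c_62, n_64, n_42, c_61, c_76, n_71] at hh
    exact hh
  have c_25 : sm (eo 2) (sm (eo 5) b) = sm (eo 7) b := cyc h ac72f (sq2 h) HH2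
  have c_57 : sm (eo 5) (sm (eo 7) b) = sm (eo 2) b := cyc h (ac25 h) (sq5 h) c_25
  have n_27 : sm (eo 2) (sm (eo 7) b) = -(sm (eo 5) b) := negfact h ac72f HH2
  have n_52 : sm (eo 5) (sm (eo 2) b) = -(sm (eo 7) b) := negfact h (ac25 h) c_25
  have n_75 : sm (eo 7) (sm (eo 5) b) = -(sm (eo 2) b) := negfact h (ac57 h) c_57
  have HH3 : sm (eo 7) (sm (eo 3) (b)) = sm (eo 4) (b) := by
    have hh := congrArg (fun x : M => sm (eo 3) (x)) (hom (sm (eo 3) (sm (eo 4) (b))))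
    simp only [ac12 h, ac13 h, ac14 h, ac15 h, ac16 h, ac17 h, ac23 h, ac24 h, ac25 h, ac26 h, ac27 h, ac34 h, ac35 h, ac36 h, ac37 h, ac45 h, ac46 h, ac47 h, ac56 h, ac57 h, ac67 h, sq1 h, sq2 h, sq3 h, sq4 h, sq5 h, sq6 h, sq7 h, sm_neg_right h, neg_neg, neg_inj, c_31, n_32, n_21, c_51, n_54, n_41, c_62, n_64, n_42, c_61, c_76, n_71, HH2, n_52, n_75] at hh
    exact hh
  have c_34 : sm (eo 3) (sm (eo 4) b) = sm (eo 7) b := cyc h ac73f (sq3 h) HH3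
  have c_47 : sm (eo 4) (sm (eo 7) b) = sm (eo 3) b := cyc h (ac34 h) (sq4 h) c_34
  have n_37 : sm (eo 3) (sm (eo 7) b) = -(sm (eo 4) b) := negfact h ac73f HH3
  have n_43 : sm (eo 4) (sm (eo 3) b) = -(sm (eo 7) b) := negfact h (ac34 h) c_34
  have n_74 : sm (eo 7) (sm (eo 4) b) = -(sm (eo 3) b) := negfact h (ac47 h) c_47
  have HH4 : -(sm (eo 6) (sm (eo 3) (b))) = sm (eo 5) (b) := by
    have hh := congrArg (fun x : M => sm (eo 3) (x)) (hom (sm (eo 3) (sm (eo 5) (b))))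
    simp only [ac12 h, ac13 h, ac14 h, ac15 h, ac16 h, ac17 h, ac23 h, ac24 h, ac25 h, ac26 h, ac27 h, ac34 h, ac35 h, ac36 h, ac37 h, ac45 h, ac46 h, ac47 h, ac56 h, ac57 h, ac67 h, sq1 h, sq2 h, sq3 h, sq4 h, sq5 h, sq6 h, sq7 h, sm_neg_right h, neg_neg, neg_inj, c_31, n_32, n_21, c_51, n_54, n_41, c_62, n_64, n_42, c_61, c_76, n_71, HH2, n_52, n_75, HH3, n_43, n_74] at hh
    exact hh
  have c_36 : sm (eo 3) (sm (eo 6) b) = sm (eo 5) b := by rw [ac36 h, ← HH4]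
  have c_65 : sm (eo 6) (sm (eo 5) b) = sm (eo 3) b := cyc h (ac36 h) (sq6 h) c_36
  have c_53 : sm (eo 5) (sm (eo 3) b) = sm (eo 6) b := cyc h ac65f (sq5 h) c_65
  have n_63 : sm (eo 6) (sm (eo 3) b) = -(sm (eo 5) b) := negfact h (ac36 h) c_36
  have n_56 : sm (eo 5) (sm (eo 6) b) = -(sm (eo 3) b) := negfact h ac65f c_65
  have n_35 : sm (eo 3) (sm (eo 5) b) = -(sm (eo 6) b) := negfact h ac53f c_53
  intro p q
  have hrhs : sm p (sm q b) = ∑ i : Fin 8, ∑ j : Fin 8, (co p i * co q j) • sm (eo i) (sm (eo j) b) := by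
    conv_lhs => rw [expand_o p, expand_o q]
    rw [sm_finsum_left h]
    refine Finset.sum_congr rfl fun i _ => ?_
    rw [h.real_smul, sm_finsum_left h, sm_finsum_right h, Finset.smul_sum]
    refine Finset.sum_congr rfl fun j _ => ?_
    rw [h.real_smul, h.smul_real, smul_smul]
  have hlhs : sm (p * q) b = ∑ i : Fin 8, ∑ j : Fin 8, (co p i * co q j) • sm (eo i * eo j) b := by
    rw [mul_expand_o, sm_finsum_left h]
    refine Finset.sum_congr rfl fun i _ => ?_
    rw [sm_finsum_left h]
    refine Finset.sum_congr rfl fun j _ => ?_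
    rw [h.real_smul]
  rw [hlhs, hrhs]
  refine Finset.sum_congr rfl fun i _ => ?_
  refine Finset.sum_congr rfl fun j _ => ?_
  congr 1
  rcases fin8cases i with rfl|rfl|rfl|rfl|rfl|rfl|rfl|rfl <;>
    rcases fin8cases j with rfl|rfl|rfl|rfl|rfl|rfl|rfl|rfl <;>
    simp only [t00, t01, t02, t03, t04, t05, t06, t07, t10, t11, t12, t13, t14, t15, t16, t17, t20, t21, t22, t23, t24, t25, t26, t27, t30, t31, t32, t33, t34, t35, t36, t37, t40, t41, t42, t43, t44, t45, t46, t47, t50, t51, t52, t53, t54, t55, t56, t57, t60, t61, t62, t63, t64, t65, t66, t67, t70, t71, t72, t73, t74, t75, t76, t77, sm_e0 h, sm_neg_left h, ac12 h, ac13 h, ac14 h, ac15 h, ac16 h, ac17 h, ac23 h, ac24 h, ac25 h, ac26 h, ac27 h, ac34 h, ac35 h, ac36 h, ac37 h, ac45 h, ac46 h, ac47 h, ac56 h, ac57 h, ac67 h, sq1 h, sq2 h, sq3 h, sq4 h, sq5 h, sq6 h, sq7 h, sm_neg_right h, neg_neg, neg_inj, c_31, n_32, n_21, c_51, n_54, n_41,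 c_62, n_64, n_42, c_61, c_76, n_71, HH2, n_52, n_75, HH3, n_43, n_74, c_65, c_53, n_63]

end Core
end OSimple

namespace OSimple
open Octo
section Exist
variable {M : Type*} [AddCommGroup M] [Module ℝ M] {sm : Octo → M → M}

lemma eigen_split (T : M → M) (hT2 : ∀ x : M, T (T x) = x)
    (hadd : ∀ x y : M, T (x + y) = T x + T y) (hsub : ∀ x y : M, T (x - y) = T x - T y)
    {m : M} (hm : m ≠ 0) :
    ∃ b : M, b ≠ 0 ∧ (T b = b ∨ T b = -b) ∧
      ∀ S : M → M, (∀ x y : M, S (x + y) = S x + S y) →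
        (∀ x : M, S (T x) = T (S x)) →
        ((S m = m → S b = b) ∧ (S m = -m → S b = -b)) := by
  have hT0 : T 0 = 0 := by have := hsub 0 0; simpa using this
  have hTneg : ∀ x : M, T (-x) = -T x := by
    intro x; have := hsub 0 x; simpa [hT0] using this
  by_cases h1 : m + T m = 0
  · have hTm : T m = -m := eq_neg_of_add_eq_zero_right h1
    exact ⟨m, hm, Or.inr hTm, fun S _ _ => ⟨fun hS => hS, fun hS => hS⟩⟩
  · refine ⟨m + T m, h1, Or.inl (by rw [hadd, hT2]; abel), ?_⟩
    intro S hSadd hST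
    constructor
    · intro hSm
      rw [hSadd, hST, hSm]
    · intro hSm
      rw [hSadd, hST, hSm, hTneg]
      abel

set_option maxHeartbeats 4000000 in
theorem exists_assoc_elt (h : IsOMod sm)
    (hom : ∀ m : M, sm (eo 1) (sm (eo 2) (sm (eo 3) (sm (eo 4) (sm (eo 5) (sm (eo 6) (sm (eo 7) m)))))) = -m)
    {m0 : M} (hm0 : m0 ≠ 0) :
    ∃ a : M, a ≠ 0 ∧ ∀ p q : Octo, sm (p * q) a = sm p (sm q a) := by
  have hTA2 : ∀ x : M, (fun x : M => sm (eo 3) (sm (eo 2) (sm (eo 1) (x)))) ((fun x : M => sm (eo 3) (sm (eo 2) (sm (eo 1) (x)))) x) = x := by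
    intro x; simp only [ac12 h, ac13 h, ac14 h, ac15 h, ac16 h, ac17 h, ac23 h, ac24 h, ac25 h, ac26 h, ac27 h, ac34 h, ac35 h, ac36 h, ac37 h, ac45 h, ac46 h, ac47 h, ac56 h, ac57 h, ac67 h, sq1 h, sq2 h, sq3 h, sq4 h, sq5 h, sq6 h, sq7 h, sm_neg_right h, neg_neg, neg_inj]
  have hTAadd : ∀ x y : M, (fun x : M => sm (eo 3) (sm (eo 2) (sm (eo 1) (x)))) (x + y) = (fun x : M => sm (eo 3) (sm (eo 2) (sm (eo 1) (x)))) x + (fun x : M => sm (eo 3) (sm (eo 2) (sm (eo 1) (x)))) y := by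
    intro x y; simp only [h.smul_add]
  have hTAsub : ∀ x y : M, (fun x : M => sm (eo 3) (sm (eo 2) (sm (eo 1) (x)))) (x - y) = (fun x : M => sm (eo 3) (sm (eo 2) (sm (eo 1) (x)))) x - (fun x : M => sm (eo 3) (sm (eo 2) (sm (eo 1) (x)))) y := by
    intro x y; simp only [sm_sub_right h]
  have hTB2 : ∀ x : M, (fun x : M => sm (eo 5) (sm (eo 4) (sm (eo 1) (x)))) ((fun x : M => sm (eo 5) (sm (eo 4) (sm (eo 1) (x)))) x) = x := by
    intro x; simp only [ac12 h, ac13 h, ac14 h, ac15 h, ac16 h, ac17 h, ac23 h, ac24 h, ac25 h, ac26 h, ac27 h, ac34 h, ac35 h, ac36 h, ac37 h, ac45 h, ac46 h, ac47 h, ac56 h, ac57 h, ac67 h, sq1 h, sq2 h, sq3 h, sq4 h, sq5 h, sq6 h, sq7 h, sm_neg_right h, neg_neg, neg_inj]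
  have hTBadd : ∀ x y : M, (fun x : M => sm (eo 5) (sm (eo 4) (sm (eo 1) (x)))) (x + y) = (fun x : M => sm (eo 5) (sm (eo 4) (sm (eo 1) (x)))) x + (fun x : M => sm (eo 5) (sm (eo 4) (sm (eo 1) (x)))) y := by
    intro x y; simp only [h.smul_add]
  have hTBsub : ∀ x y : M, (fun x : M => sm (eo 5) (sm (eo 4) (sm (eo 1) (x)))) (x - y) = (fun x : M => sm (eo 5) (sm (eo 4) (sm (eo 1) (x)))) x - (fun x : M => sm (eo 5) (sm (eo 4) (sm (eo 1) (x)))) y := by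
    intro x y; simp only [sm_sub_right h]
  have hTC2 : ∀ x : M, (fun x : M => sm (eo 6) (sm (eo 4) (sm (eo 2) (x)))) ((fun x : M => sm (eo 6) (sm (eo 4) (sm (eo 2) (x)))) x) = x := by
    intro x; simp only [ac12 h, ac13 h, ac14 h, ac15 h, ac16 h, ac17 h, ac23 h, ac24 h, ac25 h, ac26 h, ac27 h, ac34 h, ac35 h, ac36 h, ac37 h, ac45 h, ac46 h, ac47 h, ac56 h, ac57 h, ac67 h, sq1 h, sq2 h, sq3 h, sq4 h, sq5 h, sq6 h, sq7 h, sm_neg_right h, neg_neg, neg_inj]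
  have hTCadd : ∀ x y : M, (fun x : M => sm (eo 6) (sm (eo 4) (sm (eo 2) (x)))) (x + y) = (fun x : M => sm (eo 6) (sm (eo 4) (sm (eo 2) (x)))) x + (fun x : M => sm (eo 6) (sm (eo 4) (sm (eo 2) (x)))) y := by
    intro x y; simp only [h.smul_add]
  have hTCsub : ∀ x y : M, (fun x : M => sm (eo 6) (sm (eo 4) (sm (eo 2) (x)))) (x - y) = (fun x : M => sm (eo 6) (sm (eo 4) (sm (eo 2) (x)))) x - (fun x : M => sm (eo 6) (sm (eo 4) (sm (eo 2) (x)))) y := by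
    intro x y; simp only [sm_sub_right h]
  have hcmAB : ∀ x : M, (fun x : M => sm (eo 3) (sm (eo 2) (sm (eo 1) (x)))) ((fun x : M => sm (eo 5) (sm (eo 4) (sm (eo 1) (x)))) x) = (fun x : M => sm (eo 5) (sm (eo 4) (sm (eo 1) (x)))) ((fun x : M => sm (eo 3) (sm (eo 2) (sm (eo 1) (x)))) x) := by
    intro x; simp only [ac12 h, ac13 h, ac14 h, ac15 h, ac16 h, ac17 h, ac23 h, ac24 h, ac25 h, ac26 h, ac27 h, ac34 h, ac35 h, ac36 h, ac37 h, ac45 h, ac46 h, ac47 h, ac56 h, ac57 h, ac67 h, sq1 h, sq2 h, sq3 h, sq4 h, sq5 h, sq6 h, sq7 h, sm_neg_right h, neg_neg, neg_inj]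
  have hcmAC : ∀ x : M, (fun x : M => sm (eo 3) (sm (eo 2) (sm (eo 1) (x)))) ((fun x : M => sm (eo 6) (sm (eo 4) (sm (eo 2) (x)))) x) = (fun x : M => sm (eo 6) (sm (eo 4) (sm (eo 2) (x)))) ((fun x : M => sm (eo 3) (sm (eo 2) (sm (eo 1) (x)))) x) := by
    intro x; simp only [ac12 h, ac13 h, ac14 h, ac15 h, ac16 h, ac17 h, ac23 h, ac24 h, ac25 h, ac26 h, ac27 h, ac34 h, ac35 h, ac36 h, ac37 h, ac45 h, ac46 h, ac47 h, ac56 h, ac57 h, ac67 h, sq1 h, sq2 h, sq3 h, sq4 h, sq5 h, sq6 h, sq7 h, sm_neg_right h, neg_neg, neg_inj]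
  have hcmBC : ∀ x : M, (fun x : M => sm (eo 5) (sm (eo 4) (sm (eo 1) (x)))) ((fun x : M => sm (eo 6) (sm (eo 4) (sm (eo 2) (x)))) x) = (fun x : M => sm (eo 6) (sm (eo 4) (sm (eo 2) (x)))) ((fun x : M => sm (eo 5) (sm (eo 4) (sm (eo 1) (x)))) x) := by
    intro x; simp only [ac12 h, ac13 h, ac14 h, ac15 h, ac16 h, ac17 h, ac23 h, ac24 h, ac25 h, ac26 h, ac27 h, ac34 h, ac35 h, ac36 h, ac37 h, ac45 h, ac46 h, ac47 h, ac56 h, ac57 h, ac67 h, sq1 h, sq2 h, sq3 h, sq4 h, sq5 h, sq6 h, sq7 h, sm_neg_right h, neg_neg, neg_inj]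
  obtain ⟨b1, hb1ne, hb1eig, _⟩ := eigen_split (fun x : M => sm (eo 3) (sm (eo 2) (sm (eo 1) (x)))) hTA2 hTAadd hTAsub hm0
  obtain ⟨b2, hb2ne, hb2eig, hb2pr⟩ := eigen_split (fun x : M => sm (eo 5) (sm (eo 4) (sm (eo 1) (x)))) hTB2 hTBadd hTBsub hb1ne
  have ha2 : (fun x : M => sm (eo 3) (sm (eo 2) (sm (eo 1) (x)))) b2 = b2 ∨ (fun x : M => sm (eo 3) (sm (eo 2) (sm (eo 1) (x)))) b2 = -b2 := by
    rcases hb1eig with h1 | h1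
    · exact Or.inl ((hb2pr (fun x : M => sm (eo 3) (sm (eo 2) (sm (eo 1) (x)))) hTAadd hcmAB).1 h1)
    · exact Or.inr ((hb2pr (fun x : M => sm (eo 3) (sm (eo 2) (sm (eo 1) (x)))) hTAadd hcmAB).2 h1)
  obtain ⟨b3, hb3ne, hc3, hb3pr⟩ := eigen_split (fun x : M => sm (eo 6) (sm (eo 4) (sm (eo 2) (x)))) hTC2 hTCadd hTCsub hb2ne
  have ha3 : (fun x : M => sm (eo 3) (sm (eo 2) (sm (eo 1) (x)))) b3 = b3 ∨ (fun x : M => sm (eo 3) (sm (eo 2) (sm (eo 1) (x)))) b3 = -b3 := by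
    rcases ha2 with h1 | h1
    · exact Or.inl ((hb3pr (fun x : M => sm (eo 3) (sm (eo 2) (sm (eo 1) (x)))) hTAadd hcmAC).1 h1)
    · exact Or.inr ((hb3pr (fun x : M => sm (eo 3) (sm (eo 2) (sm (eo 1) (x)))) hTAadd hcmAC).2 h1)
  have hb3' : (fun x : M => sm (eo 5) (sm (eo 4) (sm (eo 1) (x)))) b3 = b3 ∨ (fun x : M => sm (eo 5) (sm (eo 4) (sm (eo 1) (x)))) b3 = -b3 := by
    rcases hb2eig with h1 | h1
    · exact Or.inl ((hb3pr (fun x : M => sm (eo 5) (sm (eo 4) (sm (eo 1) (x)))) hTBadd hcmBC).1 h1)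
    · exact Or.inr ((hb3pr (fun x : M => sm (eo 5) (sm (eo 4) (sm (eo 1) (x)))) hTBadd hcmBC).2 h1)
  clear hb1eig hb2eig ha2 hb2pr hb3pr hm0 hb1ne hb2ne
  rcases ha3 with ha | ha <;> rcases hb3' with hbb | hbb <;> rcases hc3 with hcc | hcc
  · -- branch t=0
    have hA : sm (eo 3) (sm (eo 2) (sm (eo 1) (b3))) = b3 := ha
    have hB : sm (eo 5) (sm (eo 4) (sm (eo 1) (b3))) = b3 := hbb
    have hC : sm (eo 6) (sm (eo 4) (sm (eo 2) (b3))) = b3 := hcc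
    have fa_ : sm (eo 3) (sm (eo 2) (b3)) = -(sm (eo 1) (b3)) := by
      have hh := congrArg (fun x : M => sm (eo 3) (sm (eo 2) (x))) hA
      simp only [ac12 h, ac13 h, ac14 h, ac15 h, ac16 h, ac17 h, ac23 h, ac24 h, ac25 h, ac26 h, ac27 h, ac34 h, ac35 h, ac36 h, ac37 h, ac45 h, ac46 h, ac47 h, ac56 h, ac57 h, ac67 h, sq1 h, sq2 h, sq3 h, sq4 h, sq5 h, sq6 h, sq7 h, sm_neg_right h, neg_neg, neg_inj] at hh ⊢
      exact hh.symm
    have fb_ : sm (eo 5) (sm (eo 4) (b3)) = -(sm (eo 1) (b3)) := by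
      have hh := congrArg (fun x : M => sm (eo 5) (sm (eo 4) (x))) hB
      simp only [ac12 h, ac13 h, ac14 h, ac15 h, ac16 h, ac17 h, ac23 h, ac24 h, ac25 h, ac26 h, ac27 h, ac34 h, ac35 h, ac36 h, ac37 h, ac45 h, ac46 h, ac47 h, ac56 h, ac57 h, ac67 h, sq1 h, sq2 h, sq3 h, sq4 h, sq5 h, sq6 h, sq7 h, sm_neg_right h, neg_neg, neg_inj] at hh ⊢
      exact hh.symm
    have fc_ : sm (eo 6) (sm (eo 4) (b3)) = -(sm (eo 2) (b3)) := by
      have hh := congrArg (fun x : M => sm (eo 6) (sm (eo 4) (x))) hC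
      simp only [ac12 h, ac13 h, ac14 h, ac15 h, ac16 h, ac17 h, ac23 h, ac24 h, ac25 h, ac26 h, ac27 h, ac34 h, ac35 h, ac36 h, ac37 h, ac45 h, ac46 h, ac47 h, ac56 h, ac57 h, ac67 h, sq1 h, sq2 h, sq3 h, sq4 h, sq5 h, sq6 h, sq7 h, sm_neg_right h, neg_neg, neg_inj] at hh ⊢
      exact hh.symm
    exact ⟨b3, hb3ne, core_to_assoc h hom fa_ fb_ fc_⟩
  · -- branch t=1
    have hA : sm (eo 3) (sm (eo 2) (sm (eo 1) (b3))) = b3 := ha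
    have hB : sm (eo 5) (sm (eo 4) (sm (eo 1) (b3))) = b3 := hbb
    have hC : sm (eo 6) (sm (eo 4) (sm (eo 2) (b3))) = -b3 := hcc
    have fa_ : sm (eo 3) (sm (eo 2) (sm (eo 1) b3)) = -(sm (eo 1) (sm (eo 1) b3)) := by
      have hh := hA
      simp only [ac12 h, ac13 h, ac14 h, ac15 h, ac16 h, ac17 h, ac23 h, ac24 h, ac25 h, ac26 h, ac27 h, ac34 h, ac35 h, ac36 h, ac37 h, ac45 h, ac46 h, ac47 h, ac56 h, ac57 h, ac67 h, sq1 h, sq2 h, sq3 h, sq4 h, sq5 h, sq6 h, sq7 h, sm_neg_right h, neg_neg, neg_inj] at hh ⊢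
      exact hh
    have fb_ : sm (eo 5) (sm (eo 4) (sm (eo 1) b3)) = -(sm (eo 1) (sm (eo 1) b3)) := by
      have hh := hB
      simp only [ac12 h, ac13 h, ac14 h, ac15 h, ac16 h, ac17 h, ac23 h, ac24 h, ac25 h, ac26 h, ac27 h, ac34 h, ac35 h, ac36 h, ac37 h, ac45 h, ac46 h, ac47 h, ac56 h, ac57 h, ac67 h, sq1 h, sq2 h, sq3 h, sq4 h, sq5 h, sq6 h, sq7 h, sm_neg_right h, neg_neg, neg_inj] at hh ⊢
      exact hh
    have fc_ : sm (eo 6) (sm (eo 4) (sm (eo 1) b3)) = -(sm (eo 2) (sm (eo 1) b3)) := by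
      have hh := congrArg (fun x : M => sm (eo 2) (sm (eo 1) (x))) hC
      simp only [ac12 h, ac13 h, ac14 h, ac15 h, ac16 h, ac17 h, ac23 h, ac24 h, ac25 h, ac26 h, ac27 h, ac34 h, ac35 h, ac36 h, ac37 h, ac45 h, ac46 h, ac47 h, ac56 h, ac57 h, ac67 h, sq1 h, sq2 h, sq3 h, sq4 h, sq5 h, sq6 h, sq7 h, sm_neg_right h, neg_neg, neg_inj] at hh ⊢
      exact hh
    have hbne : sm (eo 1) b3 ≠ 0 := by
      intro h0
      have hh := congrArg (sm (eo 1)) h0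
      rw [sq1 h, sm_zero_right h] at hh
      exact hb3ne (neg_eq_zero.mp hh)
    exact ⟨sm (eo 1) b3, hbne, core_to_assoc h hom fa_ fb_ fc_⟩
  · -- branch t=2
    have hA : sm (eo 3) (sm (eo 2) (sm (eo 1) (b3))) = b3 := ha
    have hB : sm (eo 5) (sm (eo 4) (sm (eo 1) (b3))) = -b3 := hbb
    have hC : sm (eo 6) (sm (eo 4) (sm (eo 2) (b3))) = b3 := hcc
    have fa_ : sm (eo 3) (sm (eo 2) (sm (eo 2) b3)) = -(sm (eo 1) (sm (eo 2) b3)) := by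
      have hh := congrArg (fun x : M => sm (eo 2) (sm (eo 1) (x))) hA
      simp only [ac12 h, ac13 h, ac14 h, ac15 h, ac16 h, ac17 h, ac23 h, ac24 h, ac25 h, ac26 h, ac27 h, ac34 h, ac35 h, ac36 h, ac37 h, ac45 h, ac46 h, ac47 h, ac56 h, ac57 h, ac67 h, sq1 h, sq2 h, sq3 h, sq4 h, sq5 h, sq6 h, sq7 h, sm_neg_right h, neg_neg, neg_inj] at hh ⊢
      exact hh
    have fb_ : sm (eo 5) (sm (eo 4) (sm (eo 2) b3)) = -(sm (eo 1) (sm (eo 2) b3)) := by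
      have hh := congrArg (fun x : M => sm (eo 1) (sm (eo 2) (x))) hB
      simp only [ac12 h, ac13 h, ac14 h, ac15 h, ac16 h, ac17 h, ac23 h, ac24 h, ac25 h, ac26 h, ac27 h, ac34 h, ac35 h, ac36 h, ac37 h, ac45 h, ac46 h, ac47 h, ac56 h, ac57 h, ac67 h, sq1 h, sq2 h, sq3 h, sq4 h, sq5 h, sq6 h, sq7 h, sm_neg_right h, neg_neg, neg_inj] at hh ⊢
      exact hh
    have fc_ : sm (eo 6) (sm (eo 4) (sm (eo 2) b3)) = -(sm (eo 2) (sm (eo 2) b3)) := by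
      have hh := hC
      simp only [ac12 h, ac13 h, ac14 h, ac15 h, ac16 h, ac17 h, ac23 h, ac24 h, ac25 h, ac26 h, ac27 h, ac34 h, ac35 h, ac36 h, ac37 h, ac45 h, ac46 h, ac47 h, ac56 h, ac57 h, ac67 h, sq1 h, sq2 h, sq3 h, sq4 h, sq5 h, sq6 h, sq7 h, sm_neg_right h, neg_neg, neg_inj] at hh ⊢
      exact hh
    have hbne : sm (eo 2) b3 ≠ 0 := by
      intro h0
      have hh := congrArg (sm (eo 2)) h0
      rw [sq2 h, sm_zero_right h] at hh
      exact hb3ne (neg_eq_zero.mp hh)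
    exact ⟨sm (eo 2) b3, hbne, core_to_assoc h hom fa_ fb_ fc_⟩
  · -- branch t=3
    have hA : sm (eo 3) (sm (eo 2) (sm (eo 1) (b3))) = b3 := ha
    have hB : sm (eo 5) (sm (eo 4) (sm (eo 1) (b3))) = -b3 := hbb
    have hC : sm (eo 6) (sm (eo 4) (sm (eo 2) (b3))) = -b3 := hcc
    have fa_ : sm (eo 3) (sm (eo 2) (sm (eo 3) b3)) = -(sm (eo 1) (sm (eo 3) b3)) := by
      have hh := congrArg (fun x : M => sm (eo 2) (x)) hA
      simp only [ac12 h, ac13 h, ac14 h, ac15 h, ac16 h, ac17 h, ac23 h, ac24 h, ac25 h, ac26 h, ac27 h, ac34 h, ac35 h, ac36 h, ac37 h, ac45 h, ac46 h, ac47 h, ac56 h, ac57 h, ac67 h, sq1 h, sq2 h, sq3 h, sq4 h, sq5 h, sq6 h, sq7 h, sm_neg_right h, neg_neg, neg_inj] at hh ⊢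
      exact hh.symm
    have fb_ : sm (eo 5) (sm (eo 4) (sm (eo 3) b3)) = -(sm (eo 1) (sm (eo 3) b3)) := by
      have hh := congrArg (fun x : M => sm (eo 1) (sm (eo 3) (x))) hB
      simp only [ac12 h, ac13 h, ac14 h, ac15 h, ac16 h, ac17 h, ac23 h, ac24 h, ac25 h, ac26 h, ac27 h, ac34 h, ac35 h, ac36 h, ac37 h, ac45 h, ac46 h, ac47 h, ac56 h, ac57 h, ac67 h, sq1 h, sq2 h, sq3 h, sq4 h, sq5 h, sq6 h, sq7 h, sm_neg_right h, neg_neg, neg_inj] at hh ⊢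
      exact hh
    have fc_ : sm (eo 6) (sm (eo 4) (sm (eo 3) b3)) = -(sm (eo 2) (sm (eo 3) b3)) := by
      have hh := congrArg (fun x : M => sm (eo 2) (sm (eo 3) (x))) hC
      simp only [ac12 h, ac13 h, ac14 h, ac15 h, ac16 h, ac17 h, ac23 h, ac24 h, ac25 h, ac26 h, ac27 h, ac34 h, ac35 h, ac36 h, ac37 h, ac45 h, ac46 h, ac47 h, ac56 h, ac57 h, ac67 h, sq1 h, sq2 h, sq3 h, sq4 h, sq5 h, sq6 h, sq7 h, sm_neg_right h, neg_neg, neg_inj] at hh ⊢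
      exact hh
    have hbne : sm (eo 3) b3 ≠ 0 := by
      intro h0
      have hh := congrArg (sm (eo 3)) h0
      rw [sq3 h, sm_zero_right h] at hh
      exact hb3ne (neg_eq_zero.mp hh)
    exact ⟨sm (eo 3) b3, hbne, core_to_assoc h hom fa_ fb_ fc_⟩
  · -- branch t=4
    have hA : sm (eo 3) (sm (eo 2) (sm (eo 1) (b3))) = -b3 := ha
    have hB : sm (eo 5) (sm (eo 4) (sm (eo 1) (b3))) = b3 := hbb
    have hC : sm (eo 6) (sm (eo 4) (sm (eo 2) (b3))) = b3 := hcc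
    have fa_ : sm (eo 3) (sm (eo 2) (sm (eo 4) b3)) = -(sm (eo 1) (sm (eo 4) b3)) := by
      have hh := congrArg (fun x : M => sm (eo 1) (sm (eo 4) (x))) hA
      simp only [ac12 h, ac13 h, ac14 h, ac15 h, ac16 h, ac17 h, ac23 h, ac24 h, ac25 h, ac26 h, ac27 h, ac34 h, ac35 h, ac36 h, ac37 h, ac45 h, ac46 h, ac47 h, ac56 h, ac57 h, ac67 h, sq1 h, sq2 h, sq3 h, sq4 h, sq5 h, sq6 h, sq7 h, sm_neg_right h, neg_neg, neg_inj] at hh ⊢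
      exact hh
    have fb_ : sm (eo 5) (sm (eo 4) (sm (eo 4) b3)) = -(sm (eo 1) (sm (eo 4) b3)) := by
      have hh := congrArg (fun x : M => sm (eo 4) (sm (eo 1) (x))) hB
      simp only [ac12 h, ac13 h, ac14 h, ac15 h, ac16 h, ac17 h, ac23 h, ac24 h, ac25 h, ac26 h, ac27 h, ac34 h, ac35 h, ac36 h, ac37 h, ac45 h, ac46 h, ac47 h, ac56 h, ac57 h, ac67 h, sq1 h, sq2 h, sq3 h, sq4 h, sq5 h, sq6 h, sq7 h, sm_neg_right h, neg_neg, neg_inj] at hh ⊢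
      exact hh
    have fc_ : sm (eo 6) (sm (eo 4) (sm (eo 4) b3)) = -(sm (eo 2) (sm (eo 4) b3)) := by
      have hh := congrArg (fun x : M => sm (eo 4) (sm (eo 2) (x))) hC
      simp only [ac12 h, ac13 h, ac14 h, ac15 h, ac16 h, ac17 h, ac23 h, ac24 h, ac25 h, ac26 h, ac27 h, ac34 h, ac35 h, ac36 h, ac37 h, ac45 h, ac46 h, ac47 h, ac56 h, ac57 h, ac67 h, sq1 h, sq2 h, sq3 h, sq4 h, sq5 h, sq6 h, sq7 h, sm_neg_right h, neg_neg, neg_inj] at hh ⊢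
      exact hh
    have hbne : sm (eo 4) b3 ≠ 0 := by
      intro h0
      have hh := congrArg (sm (eo 4)) h0
      rw [sq4 h, sm_zero_right h] at hh
      exact hb3ne (neg_eq_zero.mp hh)
    exact ⟨sm (eo 4) b3, hbne, core_to_assoc h hom fa_ fb_ fc_⟩
  · -- branch t=5
    have hA : sm (eo 3) (sm (eo 2) (sm (eo 1) (b3))) = -b3 := ha
    have hB : sm (eo 5) (sm (eo 4) (sm (eo 1) (b3))) = b3 := hbb
    have hC : sm (eo 6) (sm (eo 4) (sm (eo 2) (b3))) = -b3 := hcc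
    have fa_ : sm (eo 3) (sm (eo 2) (sm (eo 5) b3)) = -(sm (eo 1) (sm (eo 5) b3)) := by
      have hh := congrArg (fun x : M => sm (eo 1) (sm (eo 5) (x))) hA
      simp only [ac12 h, ac13 h, ac14 h, ac15 h, ac16 h, ac17 h, ac23 h, ac24 h, ac25 h, ac26 h, ac27 h, ac34 h, ac35 h, ac36 h, ac37 h, ac45 h, ac46 h, ac47 h, ac56 h, ac57 h, ac67 h, sq1 h, sq2 h, sq3 h, sq4 h, sq5 h, sq6 h, sq7 h, sm_neg_right h, neg_neg, neg_inj] at hh ⊢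
      exact hh
    have fb_ : sm (eo 5) (sm (eo 4) (sm (eo 5) b3)) = -(sm (eo 1) (sm (eo 5) b3)) := by
      have hh := congrArg (fun x : M => sm (eo 4) (x)) hB
      simp only [ac12 h, ac13 h, ac14 h, ac15 h, ac16 h, ac17 h, ac23 h, ac24 h, ac25 h, ac26 h, ac27 h, ac34 h, ac35 h, ac36 h, ac37 h, ac45 h, ac46 h, ac47 h, ac56 h, ac57 h, ac67 h, sq1 h, sq2 h, sq3 h, sq4 h, sq5 h, sq6 h, sq7 h, sm_neg_right h, neg_neg, neg_inj] at hh ⊢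
      exact hh.symm
    have fc_ : sm (eo 6) (sm (eo 4) (sm (eo 5) b3)) = -(sm (eo 2) (sm (eo 5) b3)) := by
      have hh := congrArg (fun x : M => sm (eo 2) (sm (eo 5) (x))) hC
      simp only [ac12 h, ac13 h, ac14 h, ac15 h, ac16 h, ac17 h, ac23 h, ac24 h, ac25 h, ac26 h, ac27 h, ac34 h, ac35 h, ac36 h, ac37 h, ac45 h, ac46 h, ac47 h, ac56 h, ac57 h, ac67 h, sq1 h, sq2 h, sq3 h, sq4 h, sq5 h, sq6 h, sq7 h, sm_neg_right h, neg_neg, neg_inj] at hh ⊢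
      exact hh
    have hbne : sm (eo 5) b3 ≠ 0 := by
      intro h0
      have hh := congrArg (sm (eo 5)) h0
      rw [sq5 h, sm_zero_right h] at hh
      exact hb3ne (neg_eq_zero.mp hh)
    exact ⟨sm (eo 5) b3, hbne, core_to_assoc h hom fa_ fb_ fc_⟩
  · -- branch t=6
    have hA : sm (eo 3) (sm (eo 2) (sm (eo 1) (b3))) = -b3 := ha
    have hB : sm (eo 5) (sm (eo 4) (sm (eo 1) (b3))) = -b3 := hbb
    have hC : sm (eo 6) (sm (eo 4) (sm (eo 2) (b3))) = b3 := hcc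
    have fa_ : sm (eo 3) (sm (eo 2) (sm (eo 6) b3)) = -(sm (eo 1) (sm (eo 6) b3)) := by
      have hh := congrArg (fun x : M => sm (eo 1) (sm (eo 6) (x))) hA
      simp only [ac12 h, ac13 h, ac14 h, ac15 h, ac16 h, ac17 h, ac23 h, ac24 h, ac25 h, ac26 h, ac27 h, ac34 h, ac35 h, ac36 h, ac37 h, ac45 h, ac46 h, ac47 h, ac56 h, ac57 h, ac67 h, sq1 h, sq2 h, sq3 h, sq4 h, sq5 h, sq6 h, sq7 h, sm_neg_right h, neg_neg, neg_inj] at hh ⊢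
      exact hh
    have fb_ : sm (eo 5) (sm (eo 4) (sm (eo 6) b3)) = -(sm (eo 1) (sm (eo 6) b3)) := by
      have hh := congrArg (fun x : M => sm (eo 1) (sm (eo 6) (x))) hB
      simp only [ac12 h, ac13 h, ac14 h, ac15 h, ac16 h, ac17 h, ac23 h, ac24 h, ac25 h, ac26 h, ac27 h, ac34 h, ac35 h, ac36 h, ac37 h, ac45 h, ac46 h, ac47 h, ac56 h, ac57 h, ac67 h, sq1 h, sq2 h, sq3 h, sq4 h, sq5 h, sq6 h, sq7 h, sm_neg_right h, neg_neg, neg_inj] at hh ⊢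
      exact hh
    have fc_ : sm (eo 6) (sm (eo 4) (sm (eo 6) b3)) = -(sm (eo 2) (sm (eo 6) b3)) := by
      have hh := congrArg (fun x : M => sm (eo 4) (x)) hC
      simp only [ac12 h, ac13 h, ac14 h, ac15 h, ac16 h, ac17 h, ac23 h, ac24 h, ac25 h, ac26 h, ac27 h, ac34 h, ac35 h, ac36 h, ac37 h, ac45 h, ac46 h, ac47 h, ac56 h, ac57 h, ac67 h, sq1 h, sq2 h, sq3 h, sq4 h, sq5 h, sq6 h, sq7 h, sm_neg_right h, neg_neg, neg_inj] at hh ⊢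
      exact hh.symm
    have hbne : sm (eo 6) b3 ≠ 0 := by
      intro h0
      have hh := congrArg (sm (eo 6)) h0
      rw [sq6 h, sm_zero_right h] at hh
      exact hb3ne (neg_eq_zero.mp hh)
    exact ⟨sm (eo 6) b3, hbne, core_to_assoc h hom fa_ fb_ fc_⟩
  · -- branch t=7
    have hA : sm (eo 3) (sm (eo 2) (sm (eo 1) (b3))) = -b3 := ha
    have hB : sm (eo 5) (sm (eo 4) (sm (eo 1) (b3))) = -b3 := hbb
    have hC : sm (eo 6) (sm (eo 4) (sm (eo 2) (b3))) = -b3 := hcc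
    have fa_ : sm (eo 3) (sm (eo 2) (sm (eo 7) b3)) = -(sm (eo 1) (sm (eo 7) b3)) := by
      have hh := congrArg (fun x : M => sm (eo 1) (sm (eo 7) (x))) hA
      simp only [ac12 h, ac13 h, ac14 h, ac15 h, ac16 h, ac17 h, ac23 h, ac24 h, ac25 h, ac26 h, ac27 h, ac34 h, ac35 h, ac36 h, ac37 h, ac45 h, ac46 h, ac47 h, ac56 h, ac57 h, ac67 h, sq1 h, sq2 h, sq3 h, sq4 h, sq5 h, sq6 h, sq7 h, sm_neg_right h, neg_neg, neg_inj] at hh ⊢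
      exact hh
    have fb_ : sm (eo 5) (sm (eo 4) (sm (eo 7) b3)) = -(sm (eo 1) (sm (eo 7) b3)) := by
      have hh := congrArg (fun x : M => sm (eo 1) (sm (eo 7) (x))) hB
      simp only [ac12 h, ac13 h, ac14 h, ac15 h, ac16 h, ac17 h, ac23 h, ac24 h, ac25 h, ac26 h, ac27 h, ac34 h, ac35 h, ac36 h, ac37 h, ac45 h, ac46 h, ac47 h, ac56 h, ac57 h, ac67 h, sq1 h, sq2 h, sq3 h, sq4 h, sq5 h, sq6 h, sq7 h, sm_neg_right h, neg_neg, neg_inj] at hh ⊢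
      exact hh
    have fc_ : sm (eo 6) (sm (eo 4) (sm (eo 7) b3)) = -(sm (eo 2) (sm (eo 7) b3)) := by
      have hh := congrArg (fun x : M => sm (eo 2) (sm (eo 7) (x))) hC
      simp only [ac12 h, ac13 h, ac14 h, ac15 h, ac16 h, ac17 h, ac23 h, ac24 h, ac25 h, ac26 h, ac27 h, ac34 h, ac35 h, ac36 h, ac37 h, ac45 h, ac46 h, ac47 h, ac56 h, ac57 h, ac67 h, sq1 h, sq2 h, sq3 h, sq4 h, sq5 h, sq6 h, sq7 h, sm_neg_right h, neg_neg, neg_inj] at hh ⊢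
      exact hh
    have hbne : sm (eo 7) b3 ≠ 0 := by
      intro h0
      have hh := congrArg (sm (eo 7)) h0
      rw [sq7 h, sm_zero_right h] at hh
      exact hb3ne (neg_eq_zero.mp hh)
    exact ⟨sm (eo 7) b3, hbne, core_to_assoc h hom fa_ fb_ fc_⟩

end Exist
end OSimple

namespace OSimple
open Octo
section Dich
variable {M : Type*} [AddCommGroup M] [Module ℝ M] {sm : Octo → M → M}

lemma conj_zero_o : Octo.conj (0 : Octo) = 0 := by apply oext <;> simp [Octo.conj]
lemma conj_sub_o (x y : Octo) : Octo.conj (x - y) = Octo.conj x - Octo.conj y := by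
  apply oext <;> simp [Octo.conj, star_sub] <;> abel
lemma sm_sub_left (h : IsOMod sm) (p q : Octo) (m : M) : sm (p - q) m = sm p m - sm q m := by
  have := map_sub ((smL h).flip m) p q
  simpa only [LinearMap.flip_apply, smL_apply] using this
lemma conj_eo1 : Octo.conj (eo 1) = -eo 1 := by apply oext <;> simp [Octo.conj, eo1]
lemma conj_eo2 : Octo.conj (eo 2) = -eo 2 := by apply oext <;> simp [Octo.conj, eo2]
lemma conj_eo3 : Octo.conj (eo 3) = -eo 3 := by apply oext <;> simp [Octo.conj, eo3]
lemma conj_eo4 : Octo.conj (eo 4) = -eo 4 := by apply oext <;> simp [Octo.conj, eo4]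
lemma conj_eo5 : Octo.conj (eo 5) = -eo 5 := by apply oext <;> simp [Octo.conj, eo5]
lemma conj_eo6 : Octo.conj (eo 6) = -eo 6 := by apply oext <;> simp [Octo.conj, eo6]
lemma conj_eo7 : Octo.conj (eo 7) = -eo 7 := by apply oext <;> simp [Octo.conj, eo7]

/-- omega as a linear map -/
def omL (h : IsOMod sm) : M →ₗ[ℝ] M :=
  smL h (eo 1) ∘ₗ smL h (eo 2) ∘ₗ smL h (eo 3) ∘ₗ smL h (eo 4) ∘ₗ smL h (eo 5) ∘ₗ
    smL h (eo 6) ∘ₗ smL h (eo 7)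

lemma omL_apply (h : IsOMod sm) (m : M) :
    omL h m = sm (eo 1) (sm (eo 2) (sm (eo 3) (sm (eo 4) (sm (eo 5) (sm (eo 6) (sm (eo 7) m))))))
    := rfl

set_option maxHeartbeats 1000000 in
lemma omL_sq (h : IsOMod sm) (m : M) : omL h (omL h m) = m := by
  simp only [omL_apply, ac12 h, ac13 h, ac14 h, ac15 h, ac16 h, ac17 h, ac23 h, ac24 h, ac25 h, ac26 h, ac27 h, ac34 h, ac35 h, ac36 h, ac37 h, ac45 h, ac46 h, ac47 h, ac56 h, ac57 h, ac67 h, sq1 h, sq2 h, sq3 h, sq4 h, sq5 h, sq6 h, sq7 h, sm_neg_right h, neg_neg, neg_inj]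

set_option maxHeartbeats 1000000 in
lemma omL_comm_basis (h : IsOMod sm) (i : Fin 8) (x : M) :
    omL h (sm (eo i) x) = sm (eo i) (omL h x) := by
  rcases fin8cases i with rfl|rfl|rfl|rfl|rfl|rfl|rfl|rfl <;>
    simp only [omL_apply, sm_e0 h, ac12 h, ac13 h, ac14 h, ac15 h, ac16 h, ac17 h, ac23 h, ac24 h, ac25 h, ac26 h, ac27 h, ac34 h, ac35 h, ac36 h, ac37 h, ac45 h, ac46 h, ac47 h, ac56 h, ac57 h, ac67 h, sq1 h, sq2 h, sq3 h, sq4 h, sq5 h, sq6 h, sq7 h, sm_neg_right h, neg_neg, neg_inj]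

lemma omL_comm (h : IsOMod sm) (p : Octo) (x : M) :
    omL h (sm p x) = sm p (omL h x) := by
  conv_lhs => rw [expand_o p]
  conv_rhs => rw [expand_o p]
  rw [sm_finsum_left h, sm_finsum_left h, map_sum]
  refine Finset.sum_congr rfl fun i _ => ?_
  rw [h.real_smul, h.real_smul, map_smul, omL_comm_basis h i]

lemma omega_dichotomy (h : IsOMod sm) (hs : IsSimpleOMod sm) :
    (∀ m : M, omL h m = -m) ∨ (∀ m : M, omL h m = m) := by
  have hsub : IsOSubmodule sm {m : M | omL h m = m} := by
    constructor
    · show omL h 0 = 0; exact map_zero _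
    · intro x y hx hy; show omL h (x + y) = x + y
      rw [map_add, hx, hy]
    · intro r x hx; show omL h (r • x) = r • x
      rw [map_smul, hx]
    · intro p x hx; show omL h (sm p x) = sm p x
      rw [omL_comm h, hx]
  rcases hs.2 _ hsub with hz | hu
  · left
    intro m
    have hmem : m + omL h m ∈ {m : M | omL h m = m} := by
      show omL h (m + omL h m) = m + omL h m
      rw [map_add, omL_sq h]; abel
    rw [hz] at hmem
    have : m + omL h m = 0 := hmem
    have := eq_neg_of_add_eq_zero_right this
    exact this
  · right
    intro m
    have : m ∈ {m : M | omL h m = m} := by rw [hu]; trivial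
    exact this

end Dich
end OSimple

namespace OSimple
open Octo
section Iso
variable {M : Type*} [AddCommGroup M] [Module ℝ M] {sm : Octo → M → M}

lemma ker_triv_A (h : IsOMod sm) {a : M} (ha : a ≠ 0)
    (hass : ∀ p q : Octo, sm (p * q) a = sm p (sm q a)) {p : Octo} (hp : sm p a = 0) : p = 0 := by
  by_contra hpne
  have hn : onorm p ≠ 0 := fun h0 => hpne (onorm_eq_zero h0)
  have h1 : (1 : Octo) = (onorm p)⁻¹ • (Octo.conj p * p) := by
    rw [conj_mul_self_o, smul_smul, inv_mul_cancel₀ hn, one_smul]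
  have : a = 0 := by
    calc a = sm 1 a := (sm_one h a).symm
    _ = sm ((onorm p)⁻¹ • (Octo.conj p * p)) a := by rw [← h1]
    _ = (onorm p)⁻¹ • sm (Octo.conj p * p) a := h.real_smul _ _ _
    _ = (onorm p)⁻¹ • sm (Octo.conj p) (sm p a) := by rw [hass]
    _ = 0 := by rw [hp, sm_zero_right h, smul_zero]
  exact ha this

theorem isoA (h : IsOMod sm) (hs : IsSimpleOMod sm) {a : M} (ha : a ≠ 0)
    (hass : ∀ p q : Octo, sm (p * q) a = sm p (sm q a)) : OIso sm oSmul := by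
  set g : Octo → M := fun p => sm p a with hg
  have ginj : Function.Injective g := by
    intro p q hpq
    have : sm (p - q) a = 0 := by rw [sm_sub_left h]; simp only [hg] at hpq; rw [hpq]; abel
    have := ker_triv_A h ha hass this
    have := sub_eq_zero.mp this
    exact this
  have gsurj : Function.Surjective g := by
    have hsub : IsOSubmodule sm (Set.range g) := by
      constructor
      · exact ⟨0, by simp only [hg]; exact sm_zero_left h a⟩
      · rintro x y ⟨p, rfl⟩ ⟨q, rfl⟩
        exact ⟨p + q, by simp only [hg]; exact h.add_smul p q a⟩
      · rintro r x ⟨p, rfl⟩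
        exact ⟨r • p, by simp only [hg]; exact h.real_smul r p a⟩
      · rintro q x ⟨p, rfl⟩
        exact ⟨q * p, by simp only [hg]; exact hass q p⟩
    rcases hs.2 _ hsub with hz | hu
    · exfalso
      have : g 1 ∈ Set.range g := ⟨1, rfl⟩
      rw [hz] at this
      exact ha (by simpa [hg, sm_one h] using this)
    · intro m
      have : m ∈ Set.range g := by rw [hu]; trivial
      exact this
  have gbij : Function.Bijective g := ⟨ginj, gsurj⟩
  set e := Equiv.ofBijective g gbij with he
  have hge : ∀ m : M, g (e.symm m) = m := fun m => e.apply_symm_apply m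
  refine ⟨e.symm, ⟨⟨?_, ?_⟩, ?_⟩, e.symm.bijective⟩
  · intro x y
    apply ginj
    rw [hge]
    show _ = g (e.symm x + e.symm y)
    calc x + y = g (e.symm x) + g (e.symm y) := by rw [hge, hge]
    _ = sm (e.symm x) a + sm (e.symm y) a := rfl
    _ = sm (e.symm x + e.symm y) a := (h.add_smul _ _ _).symm
    _ = g (e.symm x + e.symm y) := rfl
  · intro r x
    apply ginj
    rw [hge]
    calc r • x = r • g (e.symm x) := by rw [hge]
    _ = r • sm (e.symm x) a := rfl
    _ = sm (r • e.symm x) a := (h.real_smul _ _ _).symm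
    _ = g (r • e.symm x) := rfl
  · intro p m
    apply ginj
    rw [hge]
    show sm p m = g (oSmul p (e.symm m))
    calc sm p m = sm p (g (e.symm m)) := by rw [hge]
    _ = sm p (sm (e.symm m) a) := rfl
    _ = sm (p * e.symm m) a := (hass _ _).symm
    _ = g (oSmul p (e.symm m)) := rfl

lemma ker_triv_B (h : IsOMod sm) {a : M} (ha : a ≠ 0)
    (hcass : ∀ p q : Octo, sm (p * q) a = sm q (sm p a)) {x : Octo} (hx : sm x a = 0) : x = 0 := by
  by_contra hxne
  have hn : onorm x ≠ 0 := fun h0 => hxne (onorm_eq_zero h0)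
  have h1 : (1 : Octo) = (onorm x)⁻¹ • (x * Octo.conj x) := by
    rw [mul_conj_self_o, smul_smul, inv_mul_cancel₀ hn, one_smul]
  have : a = 0 := by
    calc a = sm 1 a := (sm_one h a).symm
    _ = sm ((onorm x)⁻¹ • (x * Octo.conj x)) a := by rw [← h1]
    _ = (onorm x)⁻¹ • sm (x * Octo.conj x) a := h.real_smul _ _ _
    _ = (onorm x)⁻¹ • sm (Octo.conj x) (sm x a) := by rw [hcass]
    _ = 0 := by rw [hx, sm_zero_right h, smul_zero]
  exact ha this

theorem isoB (h : IsOMod sm) (hs : IsSimpleOMod sm) {a : M} (ha : a ≠ 0)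
    (hcass : ∀ p q : Octo, sm (p * q) a = sm q (sm p a)) : OIso sm oBarSmul := by
  set g : Octo → M := fun p => sm (Octo.conj p) a with hg
  have ginj : Function.Injective g := by
    intro p q hpq
    have hsm : sm (Octo.conj (p - q)) a = 0 := by
      rw [conj_sub_o, sm_sub_left h]
      simp only [hg] at hpq
      rw [hpq]; abel
    have := ker_triv_B h ha hcass hsm
    have hc : p - q = 0 := by
      have := congrArg Octo.conj this
      rwa [conj_conj_o, conj_zero_o] at this
    exact sub_eq_zero.mp hc
  have gsurj : Function.Surjective g := by
    have hsub : IsOSubmodule sm (Set.range g) := by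
      constructor
      · exact ⟨0, by simp only [hg]; rw [conj_zero_o]; exact sm_zero_left h a⟩
      · rintro x y ⟨p, rfl⟩ ⟨q, rfl⟩
        exact ⟨p + q, by simp only [hg]; rw [conj_add_o]; exact h.add_smul _ _ a⟩
      · rintro r x ⟨p, rfl⟩
        exact ⟨r • p, by simp only [hg]; rw [conj_smul_o]; exact h.real_smul _ _ a⟩
      · rintro q x ⟨p, rfl⟩
        refine ⟨Octo.conj (Octo.conj p * q), ?_⟩
        simp only [hg]
        rw [conj_conj_o]
        exact hcass _ _
    rcases hs.2 _ hsub with hz | hu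
    · exfalso
      have : g 1 ∈ Set.range g := ⟨1, rfl⟩
      rw [hz] at this
      have h1 : g 1 = a := by simp only [hg, conj_one_o, sm_one h]
      exact ha (by rw [← h1]; exact this)
    · intro m
      have : m ∈ Set.range g := by rw [hu]; trivial
      exact this
  have gbij : Function.Bijective g := ⟨ginj, gsurj⟩
  set e := Equiv.ofBijective g gbij with he
  have hge : ∀ m : M, g (e.symm m) = m := fun m => e.apply_symm_apply m
  have geqv : ∀ (p x : Octo), g (oBarSmul p x) = sm p (g x) := by
    intro p x
    show sm (Octo.conj (Octo.conj p * x)) a = sm p (sm (Octo.conj x) a)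
    rw [conj_mul_o, conj_conj_o, hcass]
  refine ⟨e.symm, ⟨⟨?_, ?_⟩, ?_⟩, e.symm.bijective⟩
  · intro x y
    apply ginj
    rw [hge]
    calc x + y = g (e.symm x) + g (e.symm y) := by rw [hge, hge]
    _ = sm (Octo.conj (e.symm x)) a + sm (Octo.conj (e.symm y)) a := rfl
    _ = sm (Octo.conj (e.symm x) + Octo.conj (e.symm y)) a := (h.add_smul _ _ _).symm
    _ = sm (Octo.conj (e.symm x + e.symm y)) a := by rw [conj_add_o]
    _ = g (e.symm x + e.symm y) := rfl
  · intro r x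
    apply ginj
    rw [hge]
    calc r • x = r • g (e.symm x) := by rw [hge]
    _ = r • sm (Octo.conj (e.symm x)) a := rfl
    _ = sm (r • Octo.conj (e.symm x)) a := (h.real_smul _ _ _).symm
    _ = sm (Octo.conj (r • e.symm x)) a := by rw [conj_smul_o]
    _ = g (r • e.symm x) := rfl
  · intro p m
    apply ginj
    rw [hge, geqv, hge]

end Iso
end OSimple

namespace OSimple
open Octo
section Bar
variable {M : Type*} [AddCommGroup M] [Module ℝ M] {sm : Octo → M → M}

lemma isOMod_smbar (h : IsOMod sm) : IsOMod (fun (p : Octo) (m : M) => sm (Octo.conj p) m) := by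
  constructor
  · intro p m n; exact h.smul_add _ m n
  · intro p q m; rw [conj_add_o]; exact h.add_smul _ _ m
  · intro r p m; rw [conj_smul_o]; exact h.real_smul _ _ m
  · intro r p m; exact h.smul_real r _ m
  · intro m; rw [conj_one_o]; exact h.one_smul m
  · intro p q m
    have halt := h.alt (Octo.conj q) (Octo.conj p) m
    rw [conj_mul_o p q, conj_mul_o q p]
    apply eq_of_sub_eq_zero
    set A := sm (Octo.conj q * Octo.conj p) m
    set B := sm (Octo.conj p) (sm (Octo.conj q) m)
    set C := sm (Octo.conj p * Octo.conj q) m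
    set D := sm (Octo.conj q) (sm (Octo.conj p) m)
    have h2 : A - D + (C - B) = 0 := by rw [halt]; abel
    calc A - B - -(C - D) = A - D + (C - B) := by abel
    _ = 0 := h2

lemma omega_smbar (h : IsOMod sm) (hpos : ∀ m : M, omL h m = m) :
    ∀ m : M,
      (fun (p : Octo) (m : M) => sm (Octo.conj p) m) (eo 1)
        ((fun (p : Octo) (m : M) => sm (Octo.conj p) m) (eo 2)
        ((fun (p : Octo) (m : M) => sm (Octo.conj p) m) (eo 3)
        ((fun (p : Octo) (m : M) => sm (Octo.conj p) m) (eo 4)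
        ((fun (p : Octo) (m : M) => sm (Octo.conj p) m) (eo 5)
        ((fun (p : Octo) (m : M) => sm (Octo.conj p) m) (eo 6)
        ((fun (p : Octo) (m : M) => sm (Octo.conj p) m) (eo 7) m)))))) = -m := by
  intro m
  show sm (Octo.conj (eo 1)) (sm (Octo.conj (eo 2)) (sm (Octo.conj (eo 3)) (sm (Octo.conj (eo 4))
    (sm (Octo.conj (eo 5)) (sm (Octo.conj (eo 6)) (sm (Octo.conj (eo 7)) m)))))) = -m
  have hm := hpos m
  rw [omL_apply] at hm
  simp only [conj_eo1, conj_eo2, conj_eo3, conj_eo4, conj_eo5, conj_eo6, conj_eo7,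
    sm_neg_left h, sm_neg_right h, neg_neg]
  rw [hm]

theorem simple_case (h : IsOMod sm) (hs : IsSimpleOMod sm) :
    OIso sm oSmul ∨ OIso sm oBarSmul := by
  obtain ⟨m0, hm0⟩ := hs.1
  rcases omega_dichotomy h hs with hneg | hpos
  · left
    have hom : ∀ m : M,
        sm (eo 1) (sm (eo 2) (sm (eo 3) (sm (eo 4) (sm (eo 5) (sm (eo 6) (sm (eo 7) m)))))) = -m :=
      fun m => by rw [← omL_apply h]; exact hneg m
    obtain ⟨a, ha, hass⟩ := exists_assoc_elt h hom hm0
    exact isoA h hs ha hass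
  · right
    have hb := isOMod_smbar h
    obtain ⟨a, ha, hba⟩ := exists_assoc_elt hb (omega_smbar h hpos) hm0
    have hcass : ∀ u v : Octo, sm (u * v) a = sm v (sm u a) := by
      intro u v
      have := hba (Octo.conj v) (Octo.conj u)
      rwa [conj_mul_o, conj_conj_o, conj_conj_o] at this
    exact isoB h hs ha hcass

theorem not_iso : ¬ OIso oSmul oBarSmul := by
  rintro ⟨f, ⟨hlin, heqv⟩, hinj, hsurj⟩
  have fmul : ∀ (p x : Octo), f (p * x) = Octo.conj p * f x := heqv
  have hkey : ∀ x : Octo, f x = 0 := by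
    intro x
    have h1 : f (eo 1 * (eo 2 * (eo 3 * (eo 4 * (eo 5 * (eo 6 * (eo 7 * x))))))) = -(f x) := by
      rw [chain_o x, hlin.map_neg]
    have h2 : f (eo 1 * (eo 2 * (eo 3 * (eo 4 * (eo 5 * (eo 6 * (eo 7 * x))))))) = f x := by
      simp only [fmul, conj_eo1, conj_eo2, conj_eo3, conj_eo4, conj_eo5, conj_eo6, conj_eo7,
        neg_mul_o, mul_neg_o, neg_neg]
      rw [chain_o (f x), neg_neg]
    have h3 : f x = -(f x) := by rw [← h1]; exact h2.symm
    have h4 : f x + f x = 0 + 0 := by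
      calc f x + f x = f x + -(f x) := by rw [← h3]
      _ = 0 := by abel
      _ = 0 + 0 := by rw [add_zero]
    exact half_cancel h4
  obtain ⟨x, hx⟩ := hsurj 1
  exact one_ne_zero_o (by rw [← hx, hkey x])

end Bar
end OSimple


/-- Every simple left 𝕆-module is isomorphic to `𝕆` or to `𝕆̄`, and these
two are not isomorphic to each other. -/
theorem stmt12 :
    (∀ (M : Type u) (_ : AddCommGroup M), ∀ (_ : Module ℝ M) (sm : Octo → M → M),
      IsOMod sm → IsSimpleOMod sm → (OIso sm oSmul ∨ OIso sm oBarSmul)) ∧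
    ¬ OIso oSmul oBarSmul := by
  constructor
  · intro M iAG iM sm hmod hsimp
    exact OSimple.simple_case hmod hsimp
  · exact OSimple.not_iso
end
end

section
/- Let M be a left 𝕆-module and m ∈ M. Then the submodule ⟨m⟩_𝕆 generated by m is finite-dimensional over ℝ; more precisely, dim_ℝ ⟨m⟩_𝕆 ≤ 128. -/
noncomputable section

open scoped Quaternion

/-- `⟨m⟩_𝕆` as a real subspace of `M`. -/
def genSubmodule {M : Type*} [AddCommGroup M] [Module ℝ M]
    (sm : Octo → M → M) (m : M) : Submodule ℝ M where
  carrier := genSet sm m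
  zero_mem' := Set.mem_sInter.mpr fun _ hS => hS.1.zero_mem
  add_mem' := fun ha hb => Set.mem_sInter.mpr fun S hS =>
    hS.1.add_mem (Set.mem_sInter.mp ha S hS) (Set.mem_sInter.mp hb S hS)
  smul_mem' := fun r _ hx => Set.mem_sInter.mpr fun S hS =>
    hS.1.smul_mem r (Set.mem_sInter.mp hx S hS)

/-!
If `u` is an imaginary octonion then `u * u` is real, and the alternating left associator gives
`(u * u) m = u (u m)`; so the operators `m ↦ u m`, for `u` in the 7-dimensional space of
imaginary octonions, square to scalars and hence pairwise anticommute up to scalars. For such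
operators `T₀, …, Tₙ₋₁`, if `W` is invariant under `T₁, …, Tₙ₋₁` then so is `W + T₀ W`, which is
moreover invariant under `T₀`. Starting from `ℝ m` this gives an invariant subspace of dimension
at most `2 ^ 7 = 128`, which is a submodule containing `m` and so contains `⟨m⟩_𝕆`.
-/

open Module

namespace Module.End

variable {K V : Type*} [Field K] [AddCommGroup V] [Module K V]

theorem exists_invariant_submodule_finrank_le_of_anticomm {n : ℕ} (T : Fin n → End K V)
    (hsq : ∀ i, ∃ c : K, T i * T i = c • 1)
    (hanti : ∀ i j, ∃ c : K, T i * T j + T j * T i = c • 1) (v : V) :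
    ∃ W : Submodule K V, v ∈ W ∧ (∀ i, ∀ x ∈ W, T i x ∈ W) ∧
      FiniteDimensional K W ∧ finrank K W ≤ 2 ^ n := by
  induction n with
  | zero =>
    refine ⟨K ∙ v, Submodule.mem_span_singleton_self v, fun i => i.elim0, inferInstance, ?_⟩
    simpa using finrank_span_le_card ({v} : Set V)
  | succ n ih =>
    obtain ⟨W, hvW, hW, hfin, hdim⟩ := ih (fun i => T i.succ) (fun i => hsq i.succ)
      (fun i j => hanti i.succ j.succ)
    refine ⟨W ⊔ W.map (T 0), Submodule.mem_sup_left hvW, ?_, inferInstance, ?_⟩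
    · intro i x hx
      obtain ⟨y, hy, _, ⟨z, hz, rfl⟩, rfl⟩ := Submodule.mem_sup.mp hx
      rw [map_add]
      refine Fin.cases ?_ (fun k => ?_) i
      · obtain ⟨c, hc⟩ := hsq 0
        have hTz : T 0 (T 0 z) = c • z := by simpa using congr($hc z)
        rw [hTz]
        exact add_mem (Submodule.mem_sup_right ⟨y, hy, rfl⟩)
          (Submodule.mem_sup_left (W.smul_mem c hz))
      · obtain ⟨c, hc⟩ := hanti k.succ 0
        have hTz : T k.succ (T 0 z) = c • z - T 0 (T k.succ z) := by
          rw [eq_sub_iff_add_eq]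
          simpa using congr($hc z)
        rw [hTz]
        exact add_mem (Submodule.mem_sup_left (hW k y hy)) (sub_mem
          (Submodule.mem_sup_left (W.smul_mem c hz))
          (Submodule.mem_sup_right ⟨_, hW k z hz, rfl⟩))
    · calc finrank K ↥(W ⊔ W.map (T 0))
          ≤ finrank K W + finrank K (W.map (T 0)) :=
            Submodule.finrank_add_le_finrank_add_finrank _ _
        _ ≤ finrank K W + finrank K W := by grw [Submodule.finrank_map_le]
        _ ≤ 2 ^ (n + 1) := by rw [pow_succ]; omega

theorem exists_invariant_submodule_finrank_le_of_sq (U : Submodule K (End K V))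
    [FiniteDimensional K U] (hU : ∀ T ∈ U, ∃ c : K, T * T = c • 1) (v : V) :
    ∃ W : Submodule K V, v ∈ W ∧ (∀ T ∈ U, ∀ x ∈ W, T x ∈ W) ∧
      FiniteDimensional K W ∧ finrank K W ≤ 2 ^ finrank K U := by
  set b := finBasis K U
  have hsq (i) : ∃ c : K, (b i : End K V) * b i = c • 1 := hU _ (b i).2
  -- polarization: `(S + T)² - S² - T² = ST + TS`
  have hanti (i j) : ∃ c : K, (b i : End K V) * b j + b j * b i = c • 1 := by
    obtain ⟨c, hc⟩ := hsq i
    obtain ⟨d, hd⟩ := hsq j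
    obtain ⟨e, he⟩ := hU _ (add_mem (b i).2 (b j).2)
    refine ⟨e - c - d, ?_⟩
    rw [sub_smul, sub_smul, ← he, ← hc, ← hd]
    noncomm_ring
  obtain ⟨W, hvW, hW, hfin, hdim⟩ :=
    exists_invariant_submodule_finrank_le_of_anticomm (fun i => (b i : End K V)) hsq hanti v
  refine ⟨W, hvW, fun T hT x hx => ?_, hfin, hdim⟩
  rw [← Submodule.coe_mk T hT, ← b.sum_repr ⟨T, hT⟩]
  simp only [Submodule.coe_sum, Submodule.coe_smul, LinearMap.sum_apply, LinearMap.smul_apply]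
  exact Submodule.sum_mem _ fun i _ => W.smul_mem _ (hW i x hx)

end Module.End

namespace Octo

@[ext] lemma ext {x y : Octo} (h1 : p1 x = p1 y) (h2 : p2 x = p2 y) : x = y := Prod.ext h1 h2

@[simp] lemma p1_sub (x y : Octo) : p1 (x - y) = p1 x - p1 y := rfl
@[simp] lemma p1_smul (r : ℝ) (x : Octo) : p1 (r • x) = r • p1 x := rfl
@[simp] lemma p2_smul (r : ℝ) (x : Octo) : p2 (r • x) = r • p2 x := rfl
@[simp] lemma p1_one : p1 (1 : Octo) = 1 := rfl
@[simp] lemma p2_one : p2 (1 : Octo) = 0 := rfl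
@[simp] lemma p1_mul (x y : Octo) : p1 (x * y) = p1 x * p1 y - star (p2 y) * p2 x := rfl
@[simp] lemma p2_mul (x y : Octo) : p2 (x * y) = p2 y * p1 x + p2 x * star (p1 y) := rfl

instance : FiniteDimensional ℝ Octo := inferInstanceAs (FiniteDimensional ℝ (ℍ[ℝ] × ℍ[ℝ]))

lemma finrank_eq_eight : finrank ℝ Octo = 8 :=
  (finrank_prod (R := ℝ) (M := ℍ[ℝ]) (M' := ℍ[ℝ])).trans (by rw [Quaternion.finrank_eq_four])

def reₗ : Octo →ₗ[ℝ] ℝ where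
  toFun x := (p1 x).re
  map_add' _ _ := rfl
  map_smul' _ _ := rfl

@[simp] lemma reₗ_apply (x : Octo) : reₗ x = (p1 x).re := rfl

def imaginary : Submodule ℝ Octo := LinearMap.ker reₗ

lemma mem_imaginary {u : Octo} : u ∈ imaginary ↔ (p1 u).re = 0 := Iff.rfl

lemma finrank_imaginary : finrank ℝ imaginary = 7 := by
  have hsurj : LinearMap.range reₗ = ⊤ :=
    LinearMap.range_eq_top.mpr fun r => ⟨r • 1, by simp⟩
  have := LinearMap.finrank_range_add_finrank_ker reₗ
  rw [hsurj, finrank_top, finrank_self, finrank_eq_eight] at this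
  change finrank ℝ (LinearMap.ker reₗ) = 7
  omega

lemma sub_re_smul_one_mem_imaginary (p : Octo) : p - (p1 p).re • 1 ∈ imaginary := by
  simp [mem_imaginary]

lemma exists_mul_self_eq_smul_one {u : Octo} (hu : u ∈ imaginary) :
    ∃ r : ℝ, u * u = r • 1 := by
  rw [mem_imaginary] at hu
  refine ⟨-((p1 u).imI ^ 2 + (p1 u).imJ ^ 2 + (p1 u).imK ^ 2 + (p2 u).re ^ 2 + (p2 u).imI ^ 2
    + (p2 u).imJ ^ 2 + (p2 u).imK ^ 2), ?_⟩
  ext <;> simp [hu] <;> ring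

end Octo

section OModule

variable {M : Type*} [AddCommGroup M] [Module ℝ M] {sm : Octo → M → M}

theorem genSubmodule_le {m : M} {S : Submodule ℝ M} (hS : ∀ p, ∀ x ∈ S, sm p x ∈ S)
    (hm : m ∈ S) : genSubmodule sm m ≤ S :=
  fun _ hx =>
    Set.mem_sInter.mp hx S ⟨⟨S.zero_mem, S.add_mem, fun r _ hx => S.smul_mem r hx, hS⟩, hm⟩

namespace IsOMod

def lmul (h : IsOMod sm) : Octo →ₗ[ℝ] End ℝ M where
  toFun p :=
    { toFun := sm p
      map_add' := h.smul_add p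
      map_smul' := fun r x => h.smul_real r p x }
  map_add' p q := LinearMap.ext (h.add_smul p q)
  map_smul' r p := LinearMap.ext (h.real_smul r p)

lemma lmul_apply (h : IsOMod sm) (p : Octo) (x : M) : h.lmul p x = sm p x := rfl

lemma lmul_mul_self (h : IsOMod sm) (p : Octo) : h.lmul p * h.lmul p = h.lmul (p * p) := by
  ext x
  have h2 := eq_neg_iff_add_eq_zero.mp (h.alt p p x)
  rw [← two_smul ℝ, smul_eq_zero, sub_eq_zero] at h2
  exact (h2.resolve_left two_ne_zero).symm

lemma exists_lmul_mul_self_eq_smul_one (h : IsOMod sm) {u : Octo} (hu : u ∈ Octo.imaginary) :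
    ∃ c : ℝ, h.lmul u * h.lmul u = c • 1 := by
  obtain ⟨c, hc⟩ := Octo.exists_mul_self_eq_smul_one hu
  refine ⟨c, ?_⟩
  ext x
  rw [h.lmul_mul_self, hc, lmul_apply, h.real_smul, h.one_smul]
  rfl

lemma smul_mem_of_forall_imaginary (h : IsOMod sm) {W : Submodule ℝ M}
    (hW : ∀ u ∈ Octo.imaginary, ∀ x ∈ W, sm u x ∈ W) (p : Octo) {x : M} (hx : x ∈ W) :
    sm p x ∈ W := by
  rw [← add_sub_cancel ((Octo.p1 p).re • (1 : Octo)) p, h.add_smul, h.real_smul, h.one_smul]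
  exact add_mem (W.smul_mem _ hx) (hW _ (Octo.sub_re_smul_one_mem_imaginary p) x hx)

end IsOMod

end OModule

/-- The submodule generated by a single element is finite-dimensional over ℝ,
of dimension at most `128`. -/
theorem stmt16 {M : Type*} [AddCommGroup M] [Module ℝ M]
    (sm : Octo → M → M) (h : IsOMod sm) (m : M) :
    FiniteDimensional ℝ (genSubmodule sm m) ∧
      Module.finrank ℝ (genSubmodule sm m) ≤ 128 := by
  obtain ⟨W, hmW, hW, hfin, hdim⟩ :=
    Module.End.exists_invariant_submodule_finrank_le_of_sq (Octo.imaginary.map h.lmul)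
      (by rintro _ ⟨u, hu, rfl⟩; exact h.exists_lmul_mul_self_eq_smul_one hu) m
  have hle : genSubmodule sm m ≤ W :=
    genSubmodule_le (h.smul_mem_of_forall_imaginary
      fun u hu x hx => hW _ (Submodule.mem_map_of_mem hu) x hx) hmW
  have hU : finrank ℝ (Octo.imaginary.map h.lmul) ≤ 7 :=
    (Submodule.finrank_map_le _ _).trans Octo.finrank_imaginary.le
  refine ⟨Submodule.finiteDimensional_of_le hle, ?_⟩
  calc finrank ℝ (genSubmodule sm m) ≤ finrank ℝ W := Submodule.finrank_mono hle
    _ ≤ 2 ^ 7 := hdim.trans (Nat.pow_le_pow_right two_pos hU)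
    _ = 128 := rfl
end
end
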